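/- arXiv:1604.08896 — 11 statements merged into one kernel-verified Lean document; each statement's English description precedes it below -/
import Mathlib

section
/- Let R be a commutative ring and I an ideal of R that is contained in all but finitely many maximal ideals of R. Then the natural ring homomorphism R → R/I induces a surjection on unit groups R^× → (R/I)^×. -/
/-- If an ideal `I` of a commutative ring `R` is contained in all but finitely many
maximal ideals of `R`, then the natural map `Rˣ → (R/I)ˣ` is surjective. -/
theorem stmt_2 {R : Type*} [CommRing R] (I : Ideal R)
    (h : {m : Ideal R | m.IsMaximal ∧ ¬ I ≤ m}.Finite) :
    Function.Surjective
      (Units.map (Ideal.Quotient.mk I).toMonoidHom : Rˣ →* (R ⧸ I)ˣ) := by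
  classical
  intro u
  obtain ⟨x, hx⟩ := Ideal.Quotient.mk_surjective (u : R ⧸ I)
  have hS : Finite h.toFinset := by exact Finite.of_fintype _
  -- index type : Option of the exceptional maximal ideals
  set S := h.toFinset with hSdef
  let J : Option {m // m ∈ S} → Ideal R := fun o => o.elim I (fun m => m.1)
  have hmax : ∀ m : {m // m ∈ S}, (m.1).IsMaximal := fun m =>
    ((h.mem_toFinset.mp m.2).1)
  have hnle : ∀ m : {m // m ∈ S}, ¬ I ≤ m.1 := fun m =>
    ((h.mem_toFinset.mp m.2).2)
  have hpair : Pairwise fun i j => IsCoprime (J i) (J j) := by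
    have key : ∀ m : {m // m ∈ S}, IsCoprime I m.1 := by
      intro m
      rw [Ideal.isCoprime_iff_sup_eq]
      refine (hmax m).1.2 _ ?_
      refine lt_of_le_of_ne le_sup_right ?_
      intro hEq
      exact hnle m (hEq ▸ le_sup_left)
    rintro (_ | i) (_ | j) hij
    · exact absurd rfl hij
    · exact key j
    · exact (key i).symm
    · have : i.1 ≠ j.1 := fun hv => hij (by simp [Subtype.ext hv])
      rw [Ideal.isCoprime_iff_sup_eq]
      exact (hmax i).coprime_of_ne (hmax j) this
  -- target values
  let t : Option {m // m ∈ S} → R := fun o => o.elim x (fun m => if x ∈ m.1 then 1 else x)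
  obtain ⟨y, hy⟩ := Ideal.exists_forall_sub_mem_ideal hpair t
  have hyI : y - x ∈ I := hy none
  have hym : ∀ m : {m // m ∈ S}, y ∉ m.1 := by
    intro m hmem
    have hsub := hy (some m)
    by_cases hxm : x ∈ m.1
    · have : (1 : R) ∈ m.1 := by
        have := m.1.sub_mem hmem hsub
        simpa [t, hxm] using this
      exact (hmax m).ne_top (Ideal.eq_top_iff_one _ |>.mpr this)
    · have : x ∈ m.1 := by
        have := m.1.sub_mem hmem hsub
        simpa [t, hxm] using this
      exact hxm this
  -- y is a unit
  have hyu : IsUnit y := by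
    by_contra hny
    obtain ⟨m, hm, hyM⟩ := exists_max_ideal_of_mem_nonunits hny
    by_cases hIm : I ≤ m
    · -- then x ∈ m, contradicting x unit mod I
      have hxm : x ∈ m := by
        have : y - (y - x) ∈ m := m.sub_mem hyM (hIm hyI)
        simpa using this
      have hxu : IsUnit (Ideal.Quotient.mk I x) := by rw [hx]; exact u.isUnit
      obtain ⟨b, hb⟩ := hxu.exists_right_inv
      obtain ⟨c, rfl⟩ := Ideal.Quotient.mk_surjective b
      have : x * c - 1 ∈ I := by
        rw [← Ideal.Quotient.eq]
        simpa using hb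
      have h1 : (1 : R) ∈ m := by
        have h2 : x * c - (x * c - 1) ∈ m := m.sub_mem (m.mul_mem_right c hxm) (hIm this)
        simpa using h2
      exact hm.ne_top (Ideal.eq_top_iff_one _ |>.mpr h1)
    · have : m ∈ S := h.mem_toFinset.mpr ⟨hm, hIm⟩
      exact hym ⟨m, this⟩ hyM
  refine ⟨hyu.unit, ?_⟩
  ext
  have : Ideal.Quotient.mk I y = Ideal.Quotient.mk I x := Ideal.Quotient.eq.mpr hyI
  simp [this, hx]
end

section
/- Let R be a finite commutative ring. Then the number of units of R equals |R| · ∏_m (1 - 1/|R/m|), where the product runs over all maximal ideals m of R. -/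
/-!
Units lift along a nilpotent ideal, so `Rˣ` is the full preimage of `(R ⧸ N)ˣ` for `N` the
nilradical, and both `|Rˣ|` and `|R|` pick up the same factor `|N|`. The reduced quotient `R ⧸ N`
is the product of the residue fields `R ⧸ m` by the Chinese remainder theorem, and a finite
field with `q` elements has `q - 1 = q (1 - 1/q)` units.
-/

theorem Ideal.card_units_eq_card_mul_card_units_quotient {R : Type*} [CommRing R] {I : Ideal R}
    (hI : IsNilpotent I) : Nat.card Rˣ = Nat.card I * Nat.card (R ⧸ I)ˣ := by
  have hunits : Set.range ((↑) : Rˣ → R) =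
      (QuotientAddGroup.mk : R → R ⧸ I.toAddSubgroup) ⁻¹' Set.range ((↑) : (R ⧸ I)ˣ → R ⧸ I) := by
    ext x
    exact (hI.isUnit_quotient_mk_iff (x := x)).symm
  rw [← Nat.card_range_of_injective (Units.val_injective (α := R)), hunits,
    Nat.card_congr (QuotientAddGroup.preimageMkEquivAddSubgroupProdSet _ _), Nat.card_prod,
    ← Nat.card_range_of_injective (Units.val_injective (α := R ⧸ I))]
  rfl

theorem Nat.card_units_pi {ι : Type*} [Fintype ι] (M : ι → Type*) [∀ i, Monoid (M i)] :
    Nat.card (∀ i, M i)ˣ = ∏ i, Nat.card (M i)ˣ := by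
  rw [Nat.card_congr MulEquiv.piUnits.toEquiv, Nat.card_pi]

theorem Ideal.card_units_quotient_of_isMaximal {R : Type*} [CommRing R] (m : Ideal R)
    [m.IsMaximal] [Finite (R ⧸ m)] :
    (Nat.card (R ⧸ m)ˣ : ℚ) = Nat.card (R ⧸ m) * (1 - 1 / Nat.card (R ⧸ m)) := by
  let := Ideal.Quotient.field m
  have hpos : 0 < Nat.card (R ⧸ m) := Nat.card_pos
  rw [Nat.card_units, Nat.cast_pred hpos]
  field_simp

theorem MaximalSpectrum.finprod_eq_finprod_mem_isMaximal {R M : Type*} [CommRing R]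
    [CommMonoid M] (f : Ideal R → M) :
    ∏ᶠ I : MaximalSpectrum R, f I.asIdeal = ∏ᶠ m ∈ {m : Ideal R | m.IsMaximal}, f m := by
  rw [← finprod_set_coe_eq_finprod_mem]
  exact finprod_comp_equiv (f := fun m : {m : Ideal R | m.IsMaximal} => f m)
    (MaximalSpectrum.equivSubtype R)

theorem card_units_quotient_nilradical {R : Type*} [CommRing R] [Finite R] :
    (Nat.card (R ⧸ nilradical R)ˣ : ℚ) = Nat.card (R ⧸ nilradical R) *
      ∏ᶠ m ∈ {m : Ideal R | m.IsMaximal}, (1 - 1 / (Nat.card (R ⧸ m) : ℚ)) := by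
  have := Fintype.ofFinite (MaximalSpectrum R)
  let e := (IsArtinianRing.quotNilradicalEquivPi R).toRingEquiv
  rw [Nat.card_congr (Units.mapEquiv e.toMulEquiv).toEquiv, Nat.card_units_pi,
    Nat.card_congr e.toEquiv, Nat.card_pi, ← MaximalSpectrum.finprod_eq_finprod_mem_isMaximal,
    finprod_eq_prod_of_fintype]
  push_cast
  rw [← Finset.prod_mul_distrib]
  refine Finset.prod_congr rfl fun I _ => ?_
  have : Finite (R ⧸ I.asIdeal) := Quotient.finite _
  exact I.asIdeal.card_units_quotient_of_isMaximal

/-- For a finite commutative ring `R`,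
`|Rˣ| = |R| · ∏_{m maximal} (1 - 1/|R/m|)`. -/
theorem stmt_3 {R : Type*} [CommRing R] [Fintype R] :
    (Nat.card Rˣ : ℚ) =
      (Nat.card R : ℚ) *
        ∏ᶠ m ∈ {m : Ideal R | m.IsMaximal}, (1 - 1 / (Nat.card (R ⧸ m) : ℚ)) := by
  rw [Ideal.card_units_eq_card_mul_card_units_quotient (IsNoetherianRing.isNilpotent_nilradical R),
    Submodule.card_eq_card_quotient_mul_card (nilradical R)]
  push_cast
  rw [card_units_quotient_nilradical]
  ring
end

section
/- Let R be a commutative ring of stable rank 1. Then for every n ≥ 2 the group of elementary matrices E_n(R) acts transitively on the set of unimodular rows Um_n(R); in particular R is a GE-ring (GL_n(R) = GE_n(R) for all n). -/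
open Matrix

/-- The set of elementary matrices in `GL n R`. -/
def ElementaryMatrices (R : Type) [CommRing R] (n : ℕ) : Set (GL (Fin n) R) :=
  {M | ∃ (i j : Fin n) (r : R), i ≠ j ∧
    (M : Matrix (Fin n) (Fin n) R) = 1 + Matrix.single i j r}

/-- `E_n(R)`, the subgroup of `GL n R` generated by elementary matrices. -/
def ElementarySubgroup (R : Type) [CommRing R] (n : ℕ) : Subgroup (GL (Fin n) R) :=
  Subgroup.closure (ElementaryMatrices R n)

/-- The set of invertible diagonal matrices in `GL n R`. -/
def DiagonalMatrices (R : Type) [CommRing R] (n : ℕ) : Set (GL (Fin n) R) :=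
  {M | ∃ d : Fin n → Rˣ,
    (M : Matrix (Fin n) (Fin n) R) = Matrix.diagonal (fun i => (d i : R))}

/-- `GE_n(R)`, the subgroup of `GL n R` generated by elementary and diagonal matrices. -/
def GESubgroup (R : Type) [CommRing R] (n : ℕ) : Subgroup (GL (Fin n) R) :=
  Subgroup.closure (ElementaryMatrices R n ∪ DiagonalMatrices R n)

/-!
Stable rank one lets one turn a chosen entry of a unimodular row into a unit by adding to it a
combination of the other entries, a single column operation; the other entries are then cleared
against that unit. When `n ≥ 2` the resulting row `u • e_κ` is moved to `e_κ` by
`(u, 0) ↦ (u, 1) ↦ (1, 1) ↦ (1, 0)`. For `GE_n`, the same reduction is applied to row `k` of an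
invertible matrix whose first `k` rows are already those of the identity, followed by a diagonal
rescaling; all operations act on columns and fix those rows, so after `n` steps one reaches the
identity.
-/

def HasStableRankOne (R : Type*) [CommRing R] : Prop :=
  ∀ a b : R, Ideal.span {a, b} = ⊤ → ∃ s : R, IsUnit (a + s * b)

/-- The unit is `v κ + t * b`, where `b = ∑_{j ≠ κ} v j * c j` and `(v κ, b)` is unimodular. -/
theorem HasStableRankOne.exists_isUnit_add_dotProduct {R : Type*} [CommRing R]
    (hR : HasStableRankOne R) {ι : Type*} [Fintype ι] [DecidableEq ι] {v c : ι → R}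
    (hvc : v ⬝ᵥ c = 1) (κ : ι) :
    ∃ s : ι → R, s κ = 0 ∧ (∀ j, c j = 0 → s j = 0) ∧ IsUnit (v κ + v ⬝ᵥ s) := by
  set c' := Function.update c κ 0
  have hsplit : c κ * v κ + 1 * v ⬝ᵥ c' = 1 := by
    have hc : c = c' + Pi.single κ (c κ) := by
      ext j
      by_cases hj : j = κ <;> simp [c', hj]
    rw [one_mul, ← hvc]
    conv_rhs => rw [hc]
    rw [dotProduct_add, dotProduct_single]
    ring
  obtain ⟨t, ht⟩ := hR (v κ) (v ⬝ᵥ c')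
    ((Ideal.eq_top_iff_one _).2 (Ideal.mem_span_pair.2 ⟨_, _, hsplit⟩))
  refine ⟨t • c', by simp [c'], fun j hj => ?_, by rwa [dotProduct_smul, smul_eq_mul]⟩
  by_cases hjκ : j = κ <;> simp [c', hjκ, hj]

theorem vecMul_one_add_vecMulVec {R ι : Type*} [Semiring R] [Fintype ι] [DecidableEq ι]
    (v x y : ι → R) : v ᵥ* (1 + vecMulVec x y) = v + (v ⬝ᵥ x) • y := by
  rw [vecMul_add, vecMul_one, vecMul_vecMulVec]

theorem single_one_vecMul_inv_eq_of_vecMul_eq {R ι : Type*} [Semiring R] [Fintype ι]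
    [DecidableEq ι] {N : GL ι R} {i : ι}
    (h : Pi.single i 1 ᵥ* (N : Matrix ι ι R) = Pi.single i 1) :
    Pi.single i 1 ᵥ* ((N⁻¹ : GL ι R) : Matrix ι ι R) = Pi.single i 1 := by
  conv_lhs => rw [← h, vecMul_vecMul, ← Units.val_mul, mul_inv_cancel, Units.val_one, vecMul_one]

section

variable {R : Type} [CommRing R] {n : ℕ}

theorem exists_mem_elementarySubgroup_val_eq_transvection {i j : Fin n} (hij : i ≠ j) (c : R) :
    ∃ E ∈ ElementarySubgroup R n, (E : Matrix (Fin n) (Fin n) R) = transvection i j c := by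
  refine ⟨⟨transvection i j c, transvection i j (-c), ?_, ?_⟩,
    Subgroup.subset_closure ⟨i, j, c, hij, rfl⟩, rfl⟩ <;>
  simp [transvection_mul_transvection_same _ _ hij]

/-- `b p ≠ a q` kills every product of two summands, so the product of the elementary matrices
`1 + single (a p) (b p) (r p)` is `1` plus their sum. -/
theorem exists_mem_elementarySubgroup_val_eq_one_add_sum_single {α : Type*} (T : Finset α)
    (a b : α → Fin n) (r : α → R) (hab : ∀ p ∈ T, ∀ q ∈ T, b p ≠ a q) :
    ∃ E ∈ ElementarySubgroup R n,
      (E : Matrix (Fin n) (Fin n) R) = 1 + ∑ p ∈ T, single (a p) (b p) (r p) := by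
  classical
  induction T using Finset.induction_on with
  | empty => exact ⟨1, one_mem _, by simp⟩
  | insert p T hp ih =>
    obtain ⟨E, hE, hEval⟩ := ih fun p hp q hq =>
      hab p (Finset.mem_insert_of_mem hp) q (Finset.mem_insert_of_mem hq)
    have hpT : ∀ q ∈ T, b p ≠ a q := fun q hq =>
      hab p (Finset.mem_insert_self p T) q (Finset.mem_insert_of_mem hq)
    obtain ⟨P, hP, hPval⟩ := exists_mem_elementarySubgroup_val_eq_transvection
      (hab p (Finset.mem_insert_self p T) p (Finset.mem_insert_self p T)).symm (r p)
    refine ⟨P * E, mul_mem hP hE, ?_⟩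
    have hzero : single (a p) (b p) (r p) * ∑ q ∈ T, single (a q) (b q) (r q) = 0 := by
      rw [Finset.mul_sum]
      exact Finset.sum_eq_zero fun q hq => single_mul_single_of_ne _ _ _ _ (hpT q hq) _
    rw [Units.val_mul, hPval, hEval, Finset.sum_insert hp, transvection, Matrix.add_mul,
      Matrix.one_mul, Matrix.mul_add, Matrix.mul_one, hzero, add_zero]
    abel

theorem exists_mem_elementarySubgroup_val_eq_one_add_vecMulVec_single_left {κ : Fin n}
    {t : Fin n → R} (ht : t κ = 0) :
    ∃ E ∈ ElementarySubgroup R n,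
      (E : Matrix (Fin n) (Fin n) R) = 1 + vecMulVec (Pi.single κ 1) t := by
  obtain ⟨E, hE, hEval⟩ := exists_mem_elementarySubgroup_val_eq_one_add_sum_single
    (Finset.univ.erase κ) (fun _ => κ) id t (fun _ hp _ _ => Finset.ne_of_mem_erase hp)
  refine ⟨E, hE, hEval.trans ?_⟩
  rw [Finset.sum_erase _ (by simp [ht])]
  ext i j
  simp [vecMulVec_apply, Matrix.sum_apply, single_apply, Pi.single_apply, ite_and, eq_comm]

theorem exists_mem_elementarySubgroup_val_eq_one_add_vecMulVec_single_right {κ : Fin n}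
    {s : Fin n → R} (hs : s κ = 0) :
    ∃ E ∈ ElementarySubgroup R n,
      (E : Matrix (Fin n) (Fin n) R) = 1 + vecMulVec s (Pi.single κ 1) := by
  obtain ⟨E, hE, hEval⟩ := exists_mem_elementarySubgroup_val_eq_one_add_sum_single
    (Finset.univ.erase κ) id (fun _ => κ) s (fun _ _ _ hq => (Finset.ne_of_mem_erase hq).symm)
  refine ⟨E, hE, hEval.trans ?_⟩
  rw [Finset.sum_erase _ (by simp [hs])]
  ext i j
  simp [vecMulVec_apply, Matrix.sum_apply, single_apply, Pi.single_apply, ite_and, eq_comm]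

theorem exists_mem_elementarySubgroup_single_vecMul_eq_single_one {κ o : Fin n} (hκo : κ ≠ o)
    (u : Rˣ) :
    ∃ E ∈ ElementarySubgroup R n,
      Pi.single κ (u : R) ᵥ* (E : Matrix (Fin n) (Fin n) R) = Pi.single κ 1 := by
  obtain ⟨E₁, hE₁, hE₁val⟩ := exists_mem_elementarySubgroup_val_eq_one_add_vecMulVec_single_left
    (t := Pi.single o ((u⁻¹ : Rˣ) : R)) (Pi.single_eq_of_ne hκo _)
  obtain ⟨E₂, hE₂, hE₂val⟩ := exists_mem_elementarySubgroup_val_eq_one_add_vecMulVec_single_left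
    (t := Pi.single κ (1 - u : R)) (Pi.single_eq_of_ne hκo.symm _)
  obtain ⟨E₃, hE₃, hE₃val⟩ := exists_mem_elementarySubgroup_val_eq_one_add_vecMulVec_single_left
    (t := Pi.single o (-1 : R)) (Pi.single_eq_of_ne hκo _)
  refine ⟨E₁ * E₂ * E₃, mul_mem (mul_mem hE₁ hE₂) hE₃, ?_⟩
  simp only [Units.val_mul, ← vecMul_vecMul, hE₁val, hE₂val, hE₃val, vecMul_one_add_vecMulVec,
    dotProduct_single_one]
  ext m
  rcases eq_or_ne m κ with rfl | hm
  · simp [hκo]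
  · rcases eq_or_ne m o with rfl | hmo
    · simp [hm]
    · simp [hm, hmo]

theorem exists_mem_elementarySubgroup_vecMul_eq_unit_single (hR : HasStableRankOne R)
    {F : Set (Fin n)} {κ : Fin n} (hκ : κ ∉ F) {v c : Fin n → R} (hc : ∀ j ∈ F, c j = 0)
    (hvc : v ⬝ᵥ c = 1) :
    ∃ E ∈ ElementarySubgroup R n,
      (∀ i ∈ F, Pi.single i 1 ᵥ* (E : Matrix (Fin n) (Fin n) R) = Pi.single i 1) ∧
      ∃ u : Rˣ, v ᵥ* (E : Matrix (Fin n) (Fin n) R) = Pi.single κ (u : R) := by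
  obtain ⟨s, hsκ, hsc, u, hu⟩ := hR.exists_isUnit_add_dotProduct hvc κ
  obtain ⟨E₁, hE₁, hE₁val⟩ :=
    exists_mem_elementarySubgroup_val_eq_one_add_vecMulVec_single_right hsκ
  set v₁ := v ᵥ* (E₁ : Matrix (Fin n) (Fin n) R)
  have hv₁ : v₁ κ = u := by simp [v₁, hE₁val, vecMul_one_add_vecMulVec, hu]
  obtain ⟨E₂, hE₂, hE₂val⟩ := exists_mem_elementarySubgroup_val_eq_one_add_vecMulVec_single_left
    (κ := κ) (t := ((u⁻¹ : Rˣ) : R) • (Pi.single κ (u : R) - v₁)) (by simp [hv₁])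
  refine ⟨E₁ * E₂, mul_mem hE₁ hE₂, fun i hi => ?_, u, ?_⟩
  · have hiκ : i ≠ κ := ne_of_mem_of_not_mem hi hκ
    rw [Units.val_mul, ← vecMul_vecMul, hE₁val, vecMul_one_add_vecMulVec, single_one_dotProduct,
      hsc i (hc i hi), zero_smul, add_zero, hE₂val, vecMul_one_add_vecMulVec, single_one_dotProduct,
      Pi.single_eq_of_ne hiκ, zero_smul, add_zero]
  · rw [Units.val_mul, ← vecMul_vecMul]
    change v₁ ᵥ* (E₂ : Matrix (Fin n) (Fin n) R) = _
    rw [hE₂val, vecMul_one_add_vecMulVec, dotProduct_single_one, hv₁, smul_smul, Units.mul_inv,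
      one_smul, add_sub_cancel]

theorem exists_mem_elementarySubgroup_vecMul_eq_single_one (hR : HasStableRankOne R)
    {κ o : Fin n} (hκo : κ ≠ o) {v : Fin n → R} (hv : Ideal.span (Set.range v) = ⊤) :
    ∃ E ∈ ElementarySubgroup R n, v ᵥ* (E : Matrix (Fin n) (Fin n) R) = Pi.single κ 1 := by
  obtain ⟨c, hc⟩ := Ideal.mem_span_range_iff_exists_fun.1 (hv ▸ Submodule.mem_top (x := 1))
  obtain ⟨E₁, hE₁, -, u, hu⟩ := exists_mem_elementarySubgroup_vecMul_eq_unit_single hR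
    (F := ∅) (κ := κ) (Set.notMem_empty κ) (fun _ h => h.elim)
    (by rw [dotProduct_comm]; exact hc)
  obtain ⟨E₂, hE₂, hE₂u⟩ := exists_mem_elementarySubgroup_single_vecMul_eq_single_one hκo u
  exact ⟨E₁ * E₂, mul_mem hE₁ hE₂, by rw [Units.val_mul, ← vecMul_vecMul, hu, hE₂u]⟩

theorem exists_mem_elementarySubgroup_vecMul_eq (hR : HasStableRankOne R) {κ o : Fin n}
    (hκo : κ ≠ o) {v w : Fin n → R} (hv : Ideal.span (Set.range v) = ⊤)
    (hw : Ideal.span (Set.range w) = ⊤) :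
    ∃ E ∈ ElementarySubgroup R n, v ᵥ* (E : Matrix (Fin n) (Fin n) R) = w := by
  obtain ⟨Ev, hEv, hEvv⟩ := exists_mem_elementarySubgroup_vecMul_eq_single_one hR hκo hv
  obtain ⟨Ew, hEw, hEww⟩ := exists_mem_elementarySubgroup_vecMul_eq_single_one hR hκo hw
  refine ⟨Ev * Ew⁻¹, mul_mem hEv (inv_mem hEw), ?_⟩
  rw [Units.val_mul, ← vecMul_vecMul, hEvv, ← hEww, vecMul_vecMul, ← Units.val_mul,
    mul_inv_cancel, Units.val_one, vecMul_one]

theorem elementarySubgroup_le_geSubgroup : ElementarySubgroup R n ≤ GESubgroup R n :=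
  Subgroup.closure_mono Set.subset_union_left

theorem exists_mem_geSubgroup_val_eq_diagonal (d : Fin n → Rˣ) :
    ∃ D ∈ GESubgroup R n, (D : Matrix (Fin n) (Fin n) R) = diagonal fun i => (d i : R) :=
  ⟨Units.map (diagonalRingHom (Fin n) R).toMonoidHom (MulEquiv.piUnits.symm d),
    Subgroup.subset_closure (Or.inr ⟨d, rfl⟩), rfl⟩

theorem exists_mem_geSubgroup_single_one_vecMul_mul_eq_insert (hR : HasStableRankOne R)
    {N : GL (Fin n) R} {F : Set (Fin n)} {κ : Fin n} (hκ : κ ∉ F)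
    (hN : ∀ i ∈ F, Pi.single i 1 ᵥ* (N : Matrix (Fin n) (Fin n) R) = Pi.single i 1) :
    ∃ G ∈ GESubgroup R n, ∀ i ∈ insert κ F,
      Pi.single i 1 ᵥ* ((N * G : GL (Fin n) R) : Matrix (Fin n) (Fin n) R) = Pi.single i 1 := by
  -- Column `κ` of `N⁻¹` shows that row `κ` of `N` is unimodular already off `F`.
  set c := ((N⁻¹ : GL (Fin n) R) : Matrix (Fin n) (Fin n) R) *ᵥ Pi.single κ 1
  have hc : ∀ j ∈ F, c j = 0 := fun j hj => by
    rw [← single_one_dotProduct j c, dotProduct_mulVec,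
      single_one_vecMul_inv_eq_of_vecMul_eq (hN j hj), single_one_dotProduct,
      Pi.single_eq_of_ne (ne_of_mem_of_not_mem hj hκ)]
  have hvc : Pi.single κ 1 ᵥ* (N : Matrix (Fin n) (Fin n) R) ⬝ᵥ c = 1 := by
    rw [← dotProduct_mulVec, mulVec_mulVec, ← Units.val_mul, mul_inv_cancel, Units.val_one,
      one_mulVec, single_one_dotProduct, Pi.single_eq_same]
  obtain ⟨E, hE, hEF, u, hu⟩ := exists_mem_elementarySubgroup_vecMul_eq_unit_single hR hκ hc hvc
  obtain ⟨D, hD, hDval⟩ := exists_mem_geSubgroup_val_eq_diagonal (Function.update 1 κ u⁻¹)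
  refine ⟨E * D, mul_mem (elementarySubgroup_le_geSubgroup hE) hD, ?_⟩
  rintro i (rfl | hi)
  · rw [Units.val_mul, Units.val_mul, ← vecMul_vecMul, ← vecMul_vecMul, hu, hDval,
      single_vecMul_diagonal]
    simp
  · simp [← vecMul_vecMul, hN i hi, hEF i hi, hDval, ne_of_mem_of_not_mem hi hκ]

theorem exists_mem_geSubgroup_single_one_vecMul_mul_eq_of_lt (hR : HasStableRankOne R)
    (M : GL (Fin n) R) :
    ∀ k ≤ n, ∃ G ∈ GESubgroup R n, ∀ i : Fin n, (i : ℕ) < k →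
      Pi.single i 1 ᵥ* ((M * G : GL (Fin n) R) : Matrix (Fin n) (Fin n) R) = Pi.single i 1
  | 0, _ => ⟨1, one_mem _, fun _ hi => absurd hi (Nat.not_lt_zero _)⟩
  | k + 1, hk => by
    obtain ⟨G, hG, hMG⟩ := exists_mem_geSubgroup_single_one_vecMul_mul_eq_of_lt hR M k (by omega)
    obtain ⟨G', hG', hMGG'⟩ := exists_mem_geSubgroup_single_one_vecMul_mul_eq_insert hR
      (N := M * G) (F := {i | (i : ℕ) < k}) (κ := ⟨k, hk⟩) (lt_irrefl k) hMG
    refine ⟨G * G', mul_mem hG hG', fun i hi => ?_⟩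
    rw [← mul_assoc]
    refine hMGG' i ?_
    rcases Nat.lt_succ_iff_lt_or_eq.1 hi with hi | hi
    · exact Or.inr hi
    · exact Or.inl (Fin.ext hi)

theorem geSubgroup_eq_top (hR : HasStableRankOne R) : GESubgroup R n = ⊤ := by
  refine eq_top_iff.2 fun M _ => ?_
  obtain ⟨G, hG, hMG⟩ := exists_mem_geSubgroup_single_one_vecMul_mul_eq_of_lt hR M n le_rfl
  have hMG1 : M * G = 1 := Units.ext <| ext_of_single_vecMul fun i => by
    rw [hMG i i.isLt, Units.val_one, vecMul_one]
  rw [eq_inv_of_mul_eq_one_left hMG1]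
  exact inv_mem hG

end

/-- If `R` has stable rank 1, then for every `n ≥ 2` the elementary group `E_n(R)`
acts transitively on unimodular rows, and `R` is a GE-ring. -/
theorem stmt_4 (R : Type) [CommRing R]
    (hsr : ∀ a b : R, Ideal.span {a, b} = ⊤ → ∃ s : R, IsUnit (a + s * b)) :
    (∀ n : ℕ, 2 ≤ n → ∀ v w : Fin n → R,
      Ideal.span (Set.range v) = ⊤ → Ideal.span (Set.range w) = ⊤ →
        ∃ E ∈ ElementarySubgroup R n,
          Matrix.vecMul v (E : Matrix (Fin n) (Fin n) R) = w) ∧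
    (∀ n : ℕ, GESubgroup R n = ⊤) :=
  ⟨fun n hn _ _ hv hw => exists_mem_elementarySubgroup_vecMul_eq hsr
      (κ := ⟨0, by omega⟩) (o := ⟨1, by omega⟩) (by simp [Fin.ext_iff]) hv hw,
    fun _ => geSubgroup_eq_top hsr⟩
end

section
/- Let R be a commutative ring and J an ideal contained in the Jacobson radical of R. Then for each n ≥ 2, GL_n(R) = GE_n(R) if and only if GL_n(R/J) = GE_n(R/J). -/
/-!
Reduction modulo `J` maps `GL_n(R)` onto `GL_n(R/J)` and `GE_n(R)` onto `GE_n(R/J)`: entries lift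
along `R → R/J`, and since `J ⊆ J(R)` an element of `R` is a unit as soon as its image is, so
matrices of unit determinant and diagonal units lift. The kernel, the matrices `≡ 1 mod J`, lies in
`GE_n(R)`: the pivot of such a matrix is `≡ 1`, hence a unit, so Gaussian elimination (scale the
pivot to `1`, clear the rest of its column by transvections) fixes one column at a time and stays
in the kernel. Thus `GE_n(R)` is the full preimage of `GE_n(R/J)`, and one is the whole group iff
the other is.
-/

open Matrix
theorem RingHom.comp_single_one {ι R S : Type*} [DecidableEq ι] [Semiring R] [Semiring S]
    (f : R →+* S) (j : ι) : f ∘ Pi.single j (1 : R) = Pi.single j 1 := by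
  ext i
  simp [Pi.single_apply, apply_ite f]

namespace Matrix

variable {ι R S : Type*} [Fintype ι] [DecidableEq ι] [CommRing R] [CommRing S]

theorem transvection_mulVec (i j : ι) (c : R) (v : ι → R) :
    transvection i j c *ᵥ v = v + Pi.single i (c * v j) := by
  rw [transvection, add_mulVec, one_mulVec, single_mulVec, Pi.single]

namespace GeneralLinearGroup

def transvection (i j : ι) (hij : i ≠ j) (c : R) : GL ι R where
  val := Matrix.transvection i j c
  inv := Matrix.transvection i j (-c)
  val_inv := by rw [transvection_mul_transvection_same i j hij, add_neg_cancel, transvection_zero]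
  inv_val := by rw [transvection_mul_transvection_same i j hij, neg_add_cancel, transvection_zero]

@[simp]
theorem val_transvection (i j : ι) (hij : i ≠ j) (c : R) :
    (transvection i j hij c : Matrix ι ι R) = Matrix.transvection i j c :=
  rfl

def diagonal (d : ι → Rˣ) : GL ι R where
  val := Matrix.diagonal fun i ↦ (d i : R)
  inv := Matrix.diagonal fun i ↦ ((d i)⁻¹ : Rˣ)
  val_inv := by simp [diagonal_mul_diagonal]
  inv_val := by simp [diagonal_mul_diagonal]

@[simp]
theorem val_diagonal (d : ι → Rˣ) :
    (diagonal d : Matrix ι ι R) = Matrix.diagonal fun i ↦ (d i : R) :=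
  rfl

variable (f : R →+* S)

theorem map_transvection (i j : ι) (hij : i ≠ j) (c : R) :
    map f (transvection i j hij c) = transvection i j hij (f c) := by
  ext : 1
  change f.mapMatrix (1 + single i j c) = 1 + single i j (f c)
  rw [map_add, map_one, RingHom.mapMatrix_apply, map_single]

theorem map_diagonal (d : ι → Rˣ) :
    map f (diagonal d) = diagonal fun i ↦ Units.map f (d i) := by
  ext : 1
  simp [diagonal_map]

theorem map_mulVec_comp (g : GL ι R) (v : ι → R) :
    (map f g : Matrix ι ι S) *ᵥ (f ∘ v) = f ∘ ((g : Matrix ι ι R) *ᵥ v) :=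
  funext fun i ↦ (RingHom.map_mulVec f (g : Matrix ι ι R) v i).symm

theorem map_eq_one_of_mulVec {g : GL ι R} {k : ι} {v : ι → R} (hv : f ∘ v = Pi.single k 1)
    (hgv : (g : Matrix ι ι R) *ᵥ v = Pi.single k 1)
    (hfix : ∀ j ≠ k, (g : Matrix ι ι R) *ᵥ Pi.single j 1 = Pi.single j 1) :
    map f g = 1 := by
  refine Units.ext <| ext_of_mulVec_single fun j ↦ ?_
  rw [Units.val_one, one_mulVec]
  by_cases hjk : j = k
  · subst hjk
    rw [← hv, map_mulVec_comp, hgv, f.comp_single_one, hv]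
  · rw [← f.comp_single_one, map_mulVec_comp, hfix j hjk]

theorem map_surjective {f : R →+* S} (hf : Function.Surjective f) [IsLocalHom f] :
    Function.Surjective (map (n := ι) f) := by
  intro B
  set A : Matrix ι ι R := (B : Matrix ι ι S).map (Function.surjInv hf)
  have hA : A.map f = B := by ext i j; exact Function.surjInv_eq hf _
  have hdet : IsUnit A.det := IsUnit.of_map f _ <| by
    rw [RingHom.map_det, RingHom.mapMatrix_apply, hA]
    exact (isUnit_iff_isUnit_det _).mp B.isUnit
  exact ⟨mk'' A hdet, Units.ext hA⟩

end GeneralLinearGroup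

end Matrix

namespace GESubgroup

variable {R S : Type} [CommRing R] [CommRing S] {n : ℕ}

theorem mem_elementaryMatrices_iff {g : GL (Fin n) R} :
    g ∈ ElementaryMatrices R n ↔
      ∃ i j, ∃ (hij : i ≠ j) (c : R), GeneralLinearGroup.transvection i j hij c = g := by
  constructor
  · rintro ⟨i, j, c, hij, hg⟩
    exact ⟨i, j, hij, c, Units.ext hg.symm⟩
  · rintro ⟨i, j, hij, c, rfl⟩
    exact ⟨i, j, c, hij, rfl⟩

theorem mem_diagonalMatrices_iff {g : GL (Fin n) R} :
    g ∈ DiagonalMatrices R n ↔ ∃ d, GeneralLinearGroup.diagonal d = g := by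
  constructor
  · rintro ⟨d, hg⟩
    exact ⟨d, Units.ext hg.symm⟩
  · rintro ⟨d, rfl⟩
    exact ⟨d, rfl⟩

theorem transvection_mem (i j : Fin n) (hij : i ≠ j) (c : R) :
    GeneralLinearGroup.transvection i j hij c ∈ GESubgroup R n :=
  Subgroup.subset_closure (Or.inl (mem_elementaryMatrices_iff.mpr ⟨i, j, hij, c, rfl⟩))

theorem diagonal_mem (d : Fin n → Rˣ) : GeneralLinearGroup.diagonal d ∈ GESubgroup R n :=
  Subgroup.subset_closure (Or.inr (mem_diagonalMatrices_iff.mpr ⟨d, rfl⟩))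

theorem image_map_elementaryMatrices {f : R →+* S} (hf : Function.Surjective f) :
    GeneralLinearGroup.map f '' ElementaryMatrices R n = ElementaryMatrices S n := by
  ext g
  simp only [Set.mem_image, mem_elementaryMatrices_iff]
  constructor
  · rintro ⟨_, ⟨i, j, hij, c, rfl⟩, rfl⟩
    exact ⟨i, j, hij, f c, (GeneralLinearGroup.map_transvection f i j hij c).symm⟩
  · rintro ⟨i, j, hij, c, rfl⟩
    obtain ⟨a, rfl⟩ := hf c
    exact ⟨_, ⟨i, j, hij, a, rfl⟩, GeneralLinearGroup.map_transvection f i j hij a⟩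

theorem image_map_diagonalMatrices {f : R →+* S} (hf : Function.Surjective f) [IsLocalHom f] :
    GeneralLinearGroup.map f '' DiagonalMatrices R n = DiagonalMatrices S n := by
  ext g
  simp only [Set.mem_image, mem_diagonalMatrices_iff]
  constructor
  · rintro ⟨_, ⟨d, rfl⟩, rfl⟩
    exact ⟨_, (GeneralLinearGroup.map_diagonal f d).symm⟩
  · rintro ⟨d, rfl⟩
    choose a ha using fun i ↦
      IsLocalRing.surjective_units_map_of_local_ringHom f hf inferInstance (d i)
    exact ⟨_, ⟨a, rfl⟩, by rw [GeneralLinearGroup.map_diagonal]; congr; exact funext ha⟩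

theorem map_eq_of_surjective {f : R →+* S} (hf : Function.Surjective f) [IsLocalHom f] :
    (GESubgroup R n).map (GeneralLinearGroup.map f) = GESubgroup S n := by
  rw [GESubgroup, GESubgroup, MonoidHom.map_closure, Set.image_union,
    image_map_elementaryMatrices hf, image_map_diagonalMatrices hf]

-- The second clause keeps the columns of a matrix that are already reduced intact.
def ReducibleToSingle (k : Fin n) (v : Fin n → R) : Prop :=
  ∃ g ∈ GESubgroup R n, (g : Matrix (Fin n) (Fin n) R) *ᵥ v = Pi.single k 1 ∧
    ∀ j ≠ k, (g : Matrix (Fin n) (Fin n) R) *ᵥ Pi.single j 1 = Pi.single j 1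

theorem ReducibleToSingle.of_mulVec {k : Fin n} {v : Fin n → R} {g : GL (Fin n) R}
    (hg : g ∈ GESubgroup R n)
    (hfix : ∀ j ≠ k, (g : Matrix (Fin n) (Fin n) R) *ᵥ Pi.single j 1 = Pi.single j 1)
    (h : ReducibleToSingle k ((g : Matrix (Fin n) (Fin n) R) *ᵥ v)) :
    ReducibleToSingle k v := by
  obtain ⟨g', hg', hv, hfix'⟩ := h
  refine ⟨g' * g, mul_mem hg' hg, ?_, fun j hj ↦ ?_⟩
  · rw [Units.val_mul, ← mulVec_mulVec, hv]
  · rw [Units.val_mul, ← mulVec_mulVec, hfix j hj, hfix' j hj]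

theorem reducibleToSingle_of_isUnit (k : Fin n) {v : Fin n → R} (hv : IsUnit (v k)) :
    ReducibleToSingle k v := by
  suffices ∀ s : Finset (Fin n), ∀ v : Fin n → R, IsUnit (v k) →
      (∀ i ∉ s, v i = (Pi.single k 1 : Fin n → R) i) → ReducibleToSingle k v from
    this Finset.univ v hv (by simp)
  intro s
  induction s using Finset.induction_on with
  | empty =>
    intro v _ hv
    obtain rfl : v = Pi.single k 1 := funext fun i ↦ hv i (Finset.notMem_empty i)
    exact ⟨1, one_mem _, one_mulVec _, fun j _ ↦ one_mulVec _⟩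
  | insert i s _ ih =>
    intro v hvk hv
    have hv' : ∀ l ∉ s, l ≠ i → v l = (Pi.single k 1 : Fin n → R) l := fun l hl hli ↦
      hv l (by simp [hl, hli])
    by_cases hik : i = k
    · subst hik
      refine .of_mulVec (diagonal_mem (Pi.mulSingle i hvk.unit⁻¹)) (fun j hj ↦ ?_)
        (ih _ ?_ fun l hl ↦ ?_)
      · rw [GeneralLinearGroup.val_diagonal, diagonal_mulVec_single, Pi.mulSingle_eq_of_ne hj,
          Units.val_one, one_mul]
      · rw [GeneralLinearGroup.val_diagonal, mulVec_diagonal, Pi.mulSingle_eq_same,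
          hvk.val_inv_mul]
        exact isUnit_one
      · rw [GeneralLinearGroup.val_diagonal, mulVec_diagonal]
        by_cases hli : l = i
        · rw [hli, Pi.mulSingle_eq_same, hvk.val_inv_mul, Pi.single_eq_same]
        · rw [Pi.mulSingle_eq_of_ne hli, Units.val_one, one_mul, hv' l hl hli]
    · refine .of_mulVec (transvection_mem i k hik (-(v i * ↑hvk.unit⁻¹))) (fun j hj ↦ ?_)
        (ih _ ?_ fun l hl ↦ ?_)
      · rw [GeneralLinearGroup.val_transvection, transvection_mulVec, Pi.single_eq_of_ne hj.symm,
          mul_zero, Pi.single_zero, add_zero]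
      · rw [GeneralLinearGroup.val_transvection, transvection_mulVec, Pi.add_apply,
          Pi.single_eq_of_ne (Ne.symm hik), add_zero]
        exact hvk
      · rw [GeneralLinearGroup.val_transvection, transvection_mulVec, Pi.add_apply]
        by_cases hli : l = i
        · rw [hli, Pi.single_eq_same, Pi.single_eq_of_ne hik, neg_mul, mul_assoc,
            hvk.val_inv_mul, mul_one, add_neg_cancel]
        · rw [Pi.single_eq_of_ne hli, add_zero, hv' l hl hli]

theorem ker_map_le {J : Ideal R} (hJ : J ≤ Ideal.jacobson ⊥) :
    (GeneralLinearGroup.map (n := Fin n) (Ideal.Quotient.mk J)).ker ≤ GESubgroup R n := by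
  have := isLocalHom_of_le_jacobson_bot J hJ
  set f := Ideal.Quotient.mk J
  suffices ∀ s : Finset (Fin n), ∀ A ∈ (GeneralLinearGroup.map (n := Fin n) f).ker,
      (∀ j ∉ s, (A : Matrix (Fin n) (Fin n) R) *ᵥ Pi.single j 1 = Pi.single j 1) →
      A ∈ GESubgroup R n from
    fun A hA ↦ this Finset.univ A hA (by simp)
  intro s
  induction s using Finset.induction_on with
  | empty =>
    intro A _ hA
    obtain rfl : A = 1 := Units.ext <| ext_of_mulVec_single fun j ↦ by
      rw [hA j (Finset.notMem_empty j), Units.val_one, one_mulVec]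
    exact one_mem _
  | insert k s _ ih =>
    intro A hA hfix
    set v := (A : Matrix (Fin n) (Fin n) R) *ᵥ Pi.single k 1
    have hv : f ∘ v = Pi.single k 1 := by
      rw [← GeneralLinearGroup.map_mulVec_comp, f.comp_single_one, MonoidHom.mem_ker.mp hA,
        Units.val_one, one_mulVec]
    have hvk : IsUnit (v k) := IsUnit.of_map f _ <| by
      rw [← Function.comp_apply (f := f), hv, Pi.single_eq_same]
      exact isUnit_one
    obtain ⟨g, hg, hgv, hgfix⟩ := reducibleToSingle_of_isUnit k hvk
    have hg1 : GeneralLinearGroup.map f g = 1 :=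
      GeneralLinearGroup.map_eq_one_of_mulVec f hv hgv hgfix
    have hgA : g * A ∈ (GeneralLinearGroup.map (n := Fin n) f).ker := by
      rw [MonoidHom.mem_ker, map_mul, hg1, MonoidHom.mem_ker.mp hA, one_mul]
    have := ih (g * A) hgA fun j hj ↦ by
      rw [Units.val_mul, ← mulVec_mulVec]
      by_cases hjk : j = k
      · rw [hjk, hgv]
      · rw [hfix j (by simp [hjk, hj]), hgfix j hjk]
    simpa using mul_mem (inv_mem hg) this

end GESubgroup

theorem stmt_5_general (R : Type) [CommRing R] (J : Ideal R) (hJ : J ≤ Ideal.jacobson ⊥)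
    (n : ℕ) :
    GESubgroup R n = ⊤ ↔ GESubgroup (R ⧸ J) n = ⊤ := by
  have := isLocalHom_of_le_jacobson_bot J hJ
  rw [← GESubgroup.map_eq_of_surjective (n := n) Ideal.Quotient.mk_surjective]
  constructor
  · intro h
    rw [h]
    exact Subgroup.map_top_of_surjective _
      (GeneralLinearGroup.map_surjective Ideal.Quotient.mk_surjective)
  · intro h
    rw [← Subgroup.comap_map_eq_self (GESubgroup.ker_map_le hJ), h, Subgroup.comap_top]

/-- If `J` is contained in the Jacobson radical of `R`, then for each `n ≥ 2`,
`GL_n(R) = GE_n(R)` if and only if `GL_n(R/J) = GE_n(R/J)`. -/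
theorem stmt_5 (R : Type) [CommRing R] (J : Ideal R) (hJ : J ≤ Ideal.jacobson ⊥)
    (n : ℕ) (hn : 2 ≤ n) :
    GESubgroup R n = ⊤ ↔ GESubgroup (R ⧸ J) n = ⊤ :=
  stmt_5_general R J hJ n
end

section
/- Let R be a commutative ring such that the normal closure Ê_2(R) of E_2(R) in SL_2(R) is given. The map ρ: SL_2(R) → Um_2(R) sending a matrix to its first row induces a bijection SL_2(R)/Ê_2(R) → Um_2(R)/Ê_2(R). -/
/-- `SL₂(R)`. -/
abbrev SL2 (R : Type) [CommRing R] := Matrix.SpecialLinearGroup (Fin 2) R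

/-- `Ê₂(R)`, the normal closure of the elementary subgroup `E₂(R)` in `SL₂(R)`. -/
def E2hat (R : Type) [CommRing R] : Subgroup (SL2 R) :=
  Subgroup.normalClosure
    {A | ∃ (i j : Fin 2) (r : R), i ≠ j ∧
      (A : Matrix (Fin 2) (Fin 2) R) = 1 + Matrix.single i j r}

/-- `Um₂(R)`, the set of unimodular rows of length 2. -/
def Um2 (R : Type) [CommRing R] := {v : Fin 2 → R // Ideal.span (Set.range v) = ⊤}

/-- The right `Ê₂(R)`-orbit relation on `Um₂(R)`. -/
def um2Rel (R : Type) [CommRing R] (v w : Um2 R) : Prop :=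
  ∃ E ∈ E2hat R, Matrix.vecMul v.1 (E : Matrix (Fin 2) (Fin 2) R) = w.1


/-! The whole argument rests on one observation: a matrix in `SL₂(R)` with first row `(1, 0)`
has determinant `L₁₁`, so it is the lower elementary matrix `1 + L₁₀ e₁₀` and lies in `Ê₂(R)`.
If `ρ(A) E = ρ(B)` with `E ∈ Ê₂(R)`, then `A E B⁻¹` has first row `(1, 0)`, and normality of
`Ê₂(R)` turns `A⁻¹ B = E · B⁻¹ (A E B⁻¹)⁻¹ B` into an element of `Ê₂(R)`; this is injectivity.
Surjectivity: if `x a + y b = 1`, then `(a, b)` is the first row of `!![a, b; -y, x]`. -/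

open Matrix

theorem Matrix.SpecialLinearGroup.span_range_row_eq_top {n R : Type*} [Fintype n] [DecidableEq n]
    [CommRing R] (A : SpecialLinearGroup n R) (i : n) :
    Ideal.span (Set.range ((A : Matrix n n R) i)) = ⊤ := by
  have hcofactor : ∑ j, A i j * adjugate (A : Matrix n n R) j i = 1 := by
    have h := congrFun (congrFun (mul_adjugate (A : Matrix n n R)) i) i
    rwa [SpecialLinearGroup.det_coe, one_smul, one_apply_eq, mul_apply] at h
  have hmem : ∑ j, A i j * adjugate (A : Matrix n n R) j i ∈ Ideal.span (Set.range (A i)) :=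
    Ideal.sum_mem _ fun j _ => Ideal.mul_mem_right _ _ (Ideal.subset_span ⟨j, rfl⟩)
  rwa [hcofactor, ← Ideal.eq_top_iff_one] at hmem

section

variable {R : Type} [CommRing R]

def firstRow (A : SL2 R) : Um2 R :=
  ⟨(A : Matrix (Fin 2) (Fin 2) R) 0, A.span_range_row_eq_top 0⟩

lemma firstRow_mul (A B : SL2 R) :
    (firstRow (A * B)).1 = (firstRow A).1 ᵥ* (B : Matrix (Fin 2) (Fin 2) R) :=
  rfl

lemma firstRow_surjective : Function.Surjective (firstRow (R := R)) := by
  rintro ⟨v, hv⟩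
  have hspan : Set.range v = {v 0, v 1} := by
    ext; simp [Fin.exists_fin_two, eq_comm]
  obtain ⟨x, y, hxy⟩ := Ideal.mem_span_pair.1 (hspan ▸ hv ▸ Submodule.mem_top (x := (1 : R)))
  have hdet : (!![v 0, v 1; -y, x] : Matrix (Fin 2) (Fin 2) R).det = 1 := by
    rw [det_fin_two_of]; linear_combination hxy
  exact ⟨⟨_, hdet⟩, Subtype.ext (funext fun j => by fin_cases j <;> rfl)⟩

lemma mem_E2hat_of_firstRow_eq_one {L : SL2 R} (hL : (firstRow L).1 = (firstRow 1).1) :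
    L ∈ E2hat R := by
  have h00 : (L : Matrix (Fin 2) (Fin 2) R) 0 0 = 1 := congrFun hL 0
  have h01 : (L : Matrix (Fin 2) (Fin 2) R) 0 1 = 0 := congrFun hL 1
  have h11 : (L : Matrix (Fin 2) (Fin 2) R) 1 1 = 1 := by
    have hdet := L.2
    rw [det_fin_two, h00, h01] at hdet
    linear_combination hdet
  refine Subgroup.subset_normalClosure ⟨1, 0, (L : Matrix (Fin 2) (Fin 2) R) 1 0, by decide, ?_⟩
  ext i j
  fin_cases i <;> fin_cases j <;> simp [h00, h01, h11, single, one_apply]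

lemma um2Rel_equivalence : Equivalence (um2Rel R) where
  refl _ := ⟨1, one_mem _, vecMul_one _⟩
  symm := by
    rintro v w ⟨E, hE, hvw⟩
    refine ⟨E⁻¹, inv_mem hE, ?_⟩
    calc w.1 ᵥ* _ = v.1 ᵥ* ((E * E⁻¹ : SL2 R) : Matrix (Fin 2) (Fin 2) R) := by
          rw [← hvw, vecMul_vecMul]; rfl
      _ = v.1 := by rw [mul_inv_cancel]; exact vecMul_one _
  trans := by
    rintro u v w ⟨E, hE, huv⟩ ⟨F, hF, hvw⟩
    exact ⟨E * F, mul_mem hE hF, by rw [← hvw, ← huv, vecMul_vecMul]; rfl⟩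

lemma um2Rel_firstRow_iff (A B : SL2 R) :
    um2Rel R (firstRow A) (firstRow B) ↔ (A : SL2 R ⧸ E2hat R) = B := by
  rw [QuotientGroup.eq]
  constructor
  · rintro ⟨E, hE, hrow⟩
    have hL : A * E * B⁻¹ ∈ E2hat R := by
      refine mem_E2hat_of_firstRow_eq_one ?_
      rw [firstRow_mul, firstRow_mul, hrow, ← firstRow_mul, mul_inv_cancel]
    have hconj : B⁻¹ * (A * E * B⁻¹)⁻¹ * B ∈ E2hat R :=
      Subgroup.normalClosure_normal.conj_mem' _ (inv_mem hL) B
    have hfactor : A⁻¹ * B = E * (B⁻¹ * (A * E * B⁻¹)⁻¹ * B) := by group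
    exact hfactor ▸ mul_mem hE hconj
  · intro h
    exact ⟨A⁻¹ * B, h, by rw [← firstRow_mul, mul_inv_cancel_left]⟩

lemma quot_mk_firstRow_eq_iff (A B : SL2 R) :
    Quot.mk (um2Rel R) (firstRow A) = Quot.mk (um2Rel R) (firstRow B) ↔
      (A : SL2 R ⧸ E2hat R) = B := by
  rw [Quot.eq, um2Rel_equivalence.eqvGen_iff, um2Rel_firstRow_iff]

end

/-- The first-row map `ρ : SL₂(R) → Um₂(R)` induces a bijection
`SL₂(R)/Ê₂(R) → Um₂(R)/Ê₂(R)`. -/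
theorem stmt_8 (R : Type) [CommRing R] :
    ∃ h : ∀ A : SL2 R,
        Ideal.span (Set.range fun j => (A : Matrix (Fin 2) (Fin 2) R) 0 j) = ⊤,
      ∃ f : (SL2 R ⧸ E2hat R) → Quot (um2Rel R),
        Function.Bijective f ∧
          ∀ A : SL2 R,
            f (QuotientGroup.mk A) =
              Quot.mk (um2Rel R) ⟨fun j => (A : Matrix (Fin 2) (Fin 2) R) 0 j, h A⟩ := by
  let f : SL2 R ⧸ E2hat R → Quot (um2Rel R) :=
    Quotient.lift (fun A => Quot.mk _ (firstRow A))
      fun A B h => (quot_mk_firstRow_eq_iff A B).2 (Quotient.sound h)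
  refine ⟨fun A => (firstRow A).2, f, ⟨?_, ?_⟩, fun A => rfl⟩
  · rintro ⟨A⟩ ⟨B⟩ h
    exact (quot_mk_firstRow_eq_iff A B).1 h
  · rintro ⟨v⟩
    obtain ⟨A, rfl⟩ := firstRow_surjective v
    exact ⟨A, rfl⟩
end

section
/- Let G = M ⋊ C where M is an abelian normal subgroup, C = ⟨a⟩ cyclic, and regard M as a module over R = Z[C]/ann(M). Let ν be the image in R of the norm element of Z[C] (0 if C is infinite, 1 + a + ... + a^{|C|-1} otherwise). A tuple (m_1,...,m_{n-1}, m·a) with m_i, m ∈ M generates the group G if and only if (m_1,...,m_{n-1}, ν·m) generates M as an R-module. -/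
/-- The action of `C` on `M` by additive automorphisms, packaged as a homomorphism
`C →* MulAut (Multiplicative M)`, used to form the semidirect product `M ⋊ C`. -/
def sdAction (C M : Type*) [Group C] [AddCommGroup M] [DistribMulAction C M] :
    C →* MulAut (Multiplicative M) where
  toFun c := AddEquiv.toMultiplicative (DistribMulAction.toAddAut C M c)
  map_one' := by ext x; simp
  map_mul' c c' := by ext x; simp [mul_smul]

/-!
Write `g = m'·a` and `H` for the subgroup generated by the tuple. Conjugation by `g` acts on
`M` as `a`, and `C = ⟨a⟩`, so `H ∩ M` is an `R`-submodule of `M`. The power `g ^ orderOf a`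
is `ν·m'` (both are trivial when `a` has infinite order), hence `⟨g⟩ ∩ M = ⟨ν·m'⟩`.
If the `m_i` and `ν·m'` generate `M`, then `M ≤ H` and `H` maps onto `C`, so `H = G`.
Conversely the submodule `P` they generate is normal in `G`, and `G = P⟨g⟩` forces
`M = P (⟨g⟩ ∩ M) = P`.
-/

open Subgroup Pointwise

theorem Subgroup.zpowers_inf_ker {G H : Type*} [Group G] [Group H] (f : G →* H) (g : G) :
    zpowers g ⊓ f.ker = zpowers (g ^ orderOf (f g)) := by
  ext x
  simp only [mem_inf, mem_zpowers_iff, MonoidHom.mem_ker]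
  constructor
  · rintro ⟨⟨k, rfl⟩, hk⟩
    rw [map_zpow, ← orderOf_dvd_iff_zpow_eq_one] at hk
    obtain ⟨q, rfl⟩ := hk
    exact ⟨q, by rw [zpow_mul, zpow_natCast]⟩
  · rintro ⟨q, rfl⟩
    refine ⟨⟨orderOf (f g) * q, by rw [zpow_mul, zpow_natCast]⟩, ?_⟩
    rw [map_zpow, map_pow, pow_orderOf_eq_one, one_zpow]

theorem Subgroup.le_sup_inf_of_sup_eq_top {G : Type*} [Group G] {K Z A : Subgroup G} [K.Normal]
    (hKA : K ≤ A) (h : K ⊔ Z = ⊤) : A ≤ K ⊔ Z ⊓ A := by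
  intro x hx
  obtain ⟨k, hk, z, hz, rfl⟩ : x ∈ (K : Set G) * Z := by rw [← normal_mul, h]; trivial
  exact mul_mem_sup hk ⟨hz, by simpa using mul_mem (inv_mem (hKA hk)) hx⟩

theorem Submodule.smul_mem_span_of_forall_smul_mem {α R M : Type*} [Monoid α] [Semiring R]
    [AddCommMonoid M] [Module R M] [DistribMulAction α M] [SMulCommClass α R M] {s : Set M}
    (hs : ∀ c : α, ∀ x ∈ s, c • x ∈ s) (c : α) {x : M} (hx : x ∈ span R s) :
    c • x ∈ span R s := by
  have hcx := smul_mem_pointwise_smul x c (span R s) hx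
  rw [smul_span] at hcx
  exact span_mono (Set.smul_set_subset_iff.2 (hs c)) hcx

namespace SemidirectProduct

variable {N G : Type*} [Group G]

theorem eq_top_of_range_inl_le [Group N] {φ : G →* MulAut N} {H : Subgroup (N ⋊[φ] G)}
    {x : N ⋊[φ] G} (hx : x ∈ H) (hG : ∀ g : G, g ∈ zpowers x.right) (hN : inl.range ≤ H) :
    H = ⊤ := by
  refine eq_top_iff.2 fun y _ ↦ ?_
  obtain ⟨k, hk⟩ := mem_zpowers_iff.mp (hG y.right)
  have hy : y * (x ^ k)⁻¹ ∈ (inl : N →* N ⋊[φ] G).range := by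
    rw [range_inl_eq_ker_rightHom, MonoidHom.mem_ker, map_mul, map_inv, map_zpow]
    simp [hk]
  simpa using mul_mem (hN hy) (zpow_mem hx k)

variable [CommGroup N] {φ : G →* MulAut N}

theorem mul_inl_mul_inv (x : N ⋊[φ] G) (n : N) : x * inl n * x⁻¹ = inl (φ x.right n) := by
  ext <;> simp [mul_comm]

theorem normal_map_inl {K : Subgroup N} (hK : ∀ g, ∀ n ∈ K, φ g n ∈ K) :
    (K.map (inl : N →* N ⋊[φ] G)).Normal where
  conj_mem := by
    rintro _ ⟨n, hn, rfl⟩ x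
    rw [mul_inl_mul_inv]
    exact mem_map_of_mem _ (hK _ _ hn)

theorem inl_aut_mem {H : Subgroup (N ⋊[φ] G)} {x : N ⋊[φ] G} (hx : x ∈ H) {g : G}
    (hg : g ∈ zpowers x.right) {n : N} (hn : inl n ∈ H) : inl (φ g n) ∈ H := by
  obtain ⟨k, rfl⟩ := mem_zpowers_iff.mp hg
  have hk : (x ^ k).right = x.right ^ k := map_zpow (rightHom : N ⋊[φ] G →* G) x k
  rw [← hk, ← mul_inl_mul_inv]
  exact mul_mem (mul_mem (zpow_mem hx k) hn) (inv_mem (zpow_mem hx k))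

end SemidirectProduct

theorem finsum_smul_eq_sum_range_orderOf {C M : Type*} [Group C] [AddCommMonoid M]
    [DistribMulAction C M] {a : C} (hC : ∀ c : C, c ∈ zpowers a) (x : M) :
    ∑ᶠ c : C, c • x = ∑ i ∈ Finset.range (orderOf a), a ^ i • x := by
  classical
  -- for infinite `C` both sides are `0`: `orderOf a = Nat.card C = 0`, and the finsum has
  -- infinite support unless `x = 0`
  cases finite_or_infinite C
  · have := Fintype.ofFinite C
    rw [finsum_eq_sum_of_fintype, ← IsCyclic.image_range_orderOf hC,
      Finset.sum_image fun i hi j hj ↦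
        pow_injOn_Iio_orderOf (by simpa using hi) (by simpa using hj)]
  · rw [orderOf_eq_card_of_forall_mem_zpowers hC, Nat.card_eq_zero_of_infinite,
      Finset.sum_range_zero]
    rcases eq_or_ne x 0 with rfl | hx
    · simp
    · apply finsum_of_infinite_support
      simpa [Function.support, smul_eq_zero_iff_eq, hx] using Set.infinite_univ

section CyclicAction

open Finset SemidirectProduct

variable {C M : Type*} [Group C] [AddCommGroup M] [DistribMulAction C M] {a : C}

local notation "𝔾" => Multiplicative M ⋊[sdAction C M] C

theorem mk_pow_left (x : M) (c : C) (k : ℕ) :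
    ((⟨Multiplicative.ofAdd x, c⟩ : 𝔾) ^ k).left =
      Multiplicative.ofAdd (∑ i ∈ range k, c ^ i • x) := by
  induction k with
  | zero => rfl
  | succ k ih =>
    have hright : ((⟨Multiplicative.ofAdd x, c⟩ : 𝔾) ^ k).right = c ^ k :=
      map_pow (rightHom : 𝔾 →* C) _ k
    rw [pow_succ, mul_left, ih, hright, sum_range_succ, ofAdd_add]
    rfl

theorem mk_pow_orderOf (hC : ∀ c : C, c ∈ zpowers a) (x : M) :
    (⟨Multiplicative.ofAdd x, a⟩ : 𝔾) ^ orderOf a =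
      inl (Multiplicative.ofAdd (∑ᶠ c : C, c • x)) := by
  ext
  · rw [mk_pow_left, finsum_smul_eq_sum_range_orderOf hC]; rfl
  · exact (map_pow (rightHom : 𝔾 →* C) _ _).trans (pow_orderOf_eq_one a)

theorem zpowers_mk_inf_range_inl (hC : ∀ c : C, c ∈ zpowers a) (x : M) :
    zpowers (⟨Multiplicative.ofAdd x, a⟩ : 𝔾) ⊓ inl.range =
      zpowers (inl (Multiplicative.ofAdd (∑ᶠ c : C, c • x))) := by
  rw [range_inl_eq_ker_rightHom, zpowers_inf_ker, ← mk_pow_orderOf hC]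
  rfl

-- `inlTrace H` is `H ∩ M` and `inlSubgroup C P` is `P` seen inside `M ⋊ C`.
def inlTrace (H : Subgroup 𝔾) : Submodule ℤ M :=
  AddSubgroup.toIntSubmodule (Subgroup.toAddSubgroup' (H.comap inl))

theorem mem_inlTrace {H : Subgroup 𝔾} {y : M} :
    y ∈ inlTrace H ↔ inl (Multiplicative.ofAdd y) ∈ H :=
  Iff.rfl

variable (C) in
def inlSubgroup (P : Submodule ℤ M) : Subgroup 𝔾 :=
  P.toAddSubgroup.toSubgroup.map inl

theorem inl_mem_inlSubgroup {P : Submodule ℤ M} {y : M} (hy : y ∈ P) :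
    inl (Multiplicative.ofAdd y) ∈ inlSubgroup C P :=
  Subgroup.mem_map_of_mem _ ((Multiplicative.mem_toSubgroup _ _).2 hy)

theorem smul_mem_inlTrace (hC : ∀ c : C, c ∈ zpowers a) {x : M} {H : Subgroup 𝔾}
    (hx : (⟨Multiplicative.ofAdd x, a⟩ : 𝔾) ∈ H) (c : C) {y : M} (hy : y ∈ inlTrace H) :
    c • y ∈ inlTrace H :=
  inl_aut_mem hx (hC c) hy

theorem finsum_smul_mem_inlTrace (hC : ∀ c : C, c ∈ zpowers a) {x : M} {H : Subgroup 𝔾}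
    (hx : (⟨Multiplicative.ofAdd x, a⟩ : 𝔾) ∈ H) : ∑ᶠ c : C, c • x ∈ inlTrace H := by
  have hν := (zpowers_mk_inf_range_inl hC x).ge (mem_zpowers _)
  exact zpowers_le.2 hx hν.1

theorem eq_top_of_inlTrace_eq_top (hC : ∀ c : C, c ∈ zpowers a) {x : M} {H : Subgroup 𝔾}
    (hx : (⟨Multiplicative.ofAdd x, a⟩ : 𝔾) ∈ H) (h : inlTrace H = ⊤) : H = ⊤ := by
  refine eq_top_of_range_inl_le hx hC ?_
  rintro _ ⟨y, rfl⟩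
  exact mem_inlTrace.1 (h ▸ Submodule.mem_top : Multiplicative.toAdd y ∈ inlTrace H)

theorem eq_top_of_inlSubgroup_sup_zpowers_eq_top (hC : ∀ c : C, c ∈ zpowers a) {x : M}
    {P : Submodule ℤ M} (hP : ∀ c : C, ∀ y ∈ P, c • y ∈ P) (hx : ∑ᶠ c : C, c • x ∈ P)
    (h : inlSubgroup C P ⊔ zpowers (⟨Multiplicative.ofAdd x, a⟩ : 𝔾) = ⊤) : P = ⊤ := by
  have : (inlSubgroup C P).Normal := normal_map_inl fun c _ hy ↦ hP c _ hy
  have hrange : inl.range ≤ inlSubgroup C P := calc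
    inl.range ≤ inlSubgroup C P ⊔ zpowers _ ⊓ inl.range :=
      le_sup_inf_of_sup_eq_top (map_le_range _ _) h
    _ = inlSubgroup C P := by
      rw [zpowers_mk_inf_range_inl hC, sup_eq_left, zpowers_le]
      exact inl_mem_inlSubgroup hx
  refine eq_top_iff.2 fun y _ ↦ ?_
  obtain ⟨z, hz, hzy⟩ := hrange ⟨Multiplicative.ofAdd y, rfl⟩
  rw [inl_inj] at hzy
  subst hzy
  exact hz

end CyclicAction

/-- Lemma 3.1: in `G = M ⋊ C` with `C = ⟨a⟩` cyclic and `M` abelian, the tuple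
`(m_1, …, m_n, m'·a)` generates the group `G` if and only if
`(m_1, …, m_n, ν·m')` generates `M` as an `R = ℤ[C]/ann(M)`-module, where `ν`
is the image of the norm element (here `ν·m' = ∑ᶠ c : C, c • m'`, and `R`-module
generation is expressed as the `ℤ`-span of the `C`-orbits). -/
theorem stmt_9 {C M : Type*} [Group C] [AddCommGroup M] [DistribMulAction C M]
    (a : C) (hC : ∀ c : C, c ∈ Subgroup.zpowers a)
    (n : ℕ) (m : Fin n → M) (m' : M) :
    Subgroup.closure
        ((Set.range fun i : Fin n =>
            (⟨Multiplicative.ofAdd (m i), 1⟩ : Multiplicative M ⋊[sdAction C M] C)) ∪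
          {(⟨Multiplicative.ofAdd m', a⟩ : Multiplicative M ⋊[sdAction C M] C)}) = ⊤ ↔
      Submodule.span ℤ
        ((Set.range fun p : C × Fin n => p.1 • m p.2) ∪
          Set.range fun c : C => c • (∑ᶠ c' : C, c' • m')) = ⊤ := by
  set S : Set M := (Set.range fun p : C × Fin n => p.1 • m p.2) ∪
    Set.range fun c : C => c • (∑ᶠ c' : C, c' • m')
  have hS : ∀ c : C, ∀ x ∈ S, c • x ∈ S := by
    rintro c _ (⟨⟨d, i⟩, rfl⟩ | ⟨d, rfl⟩)
    exacts [Or.inl ⟨(c * d, i), mul_smul c d _⟩, Or.inr ⟨c * d, mul_smul c d _⟩]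
  constructor
  · intro hH
    refine eq_top_of_inlSubgroup_sup_zpowers_eq_top hC
      (fun c _ ↦ Submodule.smul_mem_span_of_forall_smul_mem hS c)
      (Submodule.subset_span (Or.inr ⟨1, one_smul _ _⟩)) (eq_top_iff.2 ?_)
    rw [← hH, closure_le]
    rintro _ (⟨i, rfl⟩ | rfl)
    · exact mem_sup_left
        (inl_mem_inlSubgroup (Submodule.subset_span (Or.inl ⟨(1, i), one_smul _ _⟩)))
    · exact mem_sup_right (mem_zpowers _)
  · intro hN
    refine eq_top_of_inlTrace_eq_top hC (subset_closure (Or.inr rfl))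
      (eq_top_iff.2 (hN ▸ Submodule.span_le.2 ?_))
    rintro _ (⟨⟨c, i⟩, rfl⟩ | ⟨c, rfl⟩) <;>
      refine smul_mem_inlTrace hC (subset_closure (Or.inr rfl)) c ?_
    exacts [subset_closure (Or.inl ⟨i, rfl⟩),
      finsum_smul_mem_inlTrace hC (subset_closure (Or.inr rfl))]
end

section
/- With G = M ⋊ C as above, if the norm element ν(G) is nilpotent in R and (m_1,...,m_{n-1}, m·a) generates G, then (m_1,...,m_{n-1}) already generates M as an R-module. -/
/-! Let `N` be the `ℤ`-span of the `C`-translates of the `mᵢ`. Since `N` is `C`-invariant and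
`M` is abelian, `N × 1` is normal in `G = M ⋊ C`, so `G = (N × 1) ⟨g⟩` for `g = (m', a)`.
Writing `(x, 1) = (n, 1) gᵏ` forces `aᵏ = 1`, so `k` is a multiple of `d = orderOf a`, and
`g ^ d = (ν m', 1)`. Hence `M = N + ℤ ν m' ⊆ N + ν M`; since `ν` preserves `N` and is
nilpotent, `M = N + νᵏ M = N`. -/

open Finset Multiplicative

theorem Submodule.eq_top_of_isNilpotent_of_sup_range_eq_top {R M : Type*} [Semiring R]
    [AddCommMonoid M] [Module R M] {N : Submodule R M} {f : Module.End R M} (hf : IsNilpotent f)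
    (hfN : N.map f ≤ N) (h : N ⊔ LinearMap.range f = ⊤) : N = ⊤ := by
  obtain ⟨K, hK⟩ := hf
  have hpow : ∀ k : ℕ, N ⊔ LinearMap.range (f ^ k) = ⊤ := by
    intro k
    induction k with
    | zero => simp [Module.End.one_eq_id]
    | succ k ih =>
      rw [eq_top_iff, ← h]
      calc N ⊔ LinearMap.range f = N ⊔ (N ⊔ LinearMap.range (f ^ k)).map f := by
            rw [ih, Submodule.map_top]
        _ = N ⊔ N.map f ⊔ LinearMap.range (f ^ (k + 1)) := by
            rw [Submodule.map_sup, pow_succ', Module.End.mul_eq_comp, LinearMap.range_comp,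
              sup_assoc]
        _ ≤ N ⊔ LinearMap.range (f ^ (k + 1)) := sup_le_sup_right (sup_le le_rfl hfN) _
  simpa [hK] using hpow K

section

variable {C M : Type*} [Group C] [AddCommGroup M] [DistribMulAction C M]

variable (M) in
/-- The norm element `∑_{i < orderOf a} aⁱ` of `ℤ[⟨a⟩]` acting on `M`; it is `0` when `a` has
infinite order, matching the junk value of `∑ᶠ` over an infinite group. -/
noncomputable def normEnd (a : C) : Module.End ℤ M :=
  ∑ i ∈ range (orderOf a), DistribMulAction.toModuleEnd ℤ M (a ^ i)

theorem normEnd_apply (a : C) (y : M) : normEnd M a y = ∑ i ∈ range (orderOf a), a ^ i • y := by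
  simp [normEnd]

theorem normEnd_apply_eq_finsum {a : C} (hC : ∀ c : C, c ∈ Subgroup.zpowers a) (y : M) :
    normEnd M a y = ∑ᶠ c : C, c • y := by
  classical
  rw [normEnd_apply]
  rcases finite_or_infinite C with hfin | hinf
  · have := Fintype.ofFinite C
    rw [finsum_eq_sum_of_fintype, ← IsCyclic.image_range_orderOf hC,
      sum_image fun i hi j hj => pow_injOn_Iio_orderOf (mem_range.1 hi) (mem_range.1 hj)]
  · rw [Infinite.orderOf_eq_zero_of_forall_mem_zpowers hC, range_zero, sum_empty]
    rcases eq_or_ne y 0 with rfl | hy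
    · simp
    · refine (finsum_of_infinite_support ?_).symm
      have hsupp : Function.support (fun c : C => c • y) = Set.univ :=
        Set.eq_univ_of_forall fun c => (smul_ne_zero_iff_ne c).2 hy
      rw [hsupp]
      exact Set.infinite_univ

theorem isNilpotent_normEnd {a : C} (hC : ∀ c : C, c ∈ Subgroup.zpowers a)
    (hnil : ∃ k : ℕ, ∀ x : M, (fun y : M => ∑ᶠ c : C, c • y)^[k] x = 0) :
    IsNilpotent (normEnd M a) := by
  obtain ⟨k, hk⟩ := hnil
  have hν : ⇑(normEnd M a) = fun y : M => ∑ᶠ c : C, c • y := funext (normEnd_apply_eq_finsum hC)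
  exact ⟨k, LinearMap.ext fun x => by rw [Module.End.pow_apply, hν, hk, LinearMap.zero_apply]⟩

theorem map_normEnd_le {N : Submodule ℤ M} (hN : ∀ c : C, ∀ x ∈ N, c • x ∈ N) (a : C) :
    N.map (normEnd M a) ≤ N :=
  Submodule.map_le_iff_le_comap.2 fun y hy => by
    rw [Submodule.mem_comap, normEnd_apply]
    exact N.sum_mem fun i _ => hN _ _ hy

theorem smul_mem_span_range_smul {ι : Type*} (m : ι → M) (c : C) {x : M}
    (hx : x ∈ Submodule.span ℤ (Set.range fun p : C × ι => p.1 • m p.2)) :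
    c • x ∈ Submodule.span ℤ (Set.range fun p : C × ι => p.1 • m p.2) := by
  induction hx using Submodule.span_induction with
  | mem x hx =>
    obtain ⟨p, rfl⟩ := hx
    rw [← mul_smul]
    exact Submodule.subset_span ⟨(c * p.1, p.2), rfl⟩
  | zero => simp
  | add x y _ _ hx hy => rw [smul_add]; exact add_mem hx hy
  | smul z x _ hx => rw [smul_comm]; exact Submodule.smul_mem _ z hx

@[simp]
theorem toAdd_sdAction (c : C) (x : Multiplicative M) : toAdd (sdAction C M c x) = c • toAdd x :=
  rfl

theorem right_pow_mk (x : Multiplicative M) (a : C) (k : ℤ) :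
    ((⟨x, a⟩ : Multiplicative M ⋊[sdAction C M] C) ^ k).right = a ^ k :=
  map_zpow SemidirectProduct.rightHom _ k

theorem mk_pow_orderOf_s10 (m' : M) (a : C) :
    (⟨ofAdd m', a⟩ : Multiplicative M ⋊[sdAction C M] C) ^ orderOf a =
      SemidirectProduct.inl (ofAdd (normEnd M a m')) := by
  have h : ∀ j : ℕ, (⟨ofAdd m', a⟩ : Multiplicative M ⋊[sdAction C M] C) ^ j =
      ⟨ofAdd (∑ i ∈ range j, a ^ i • m'), a ^ j⟩ := by
    intro j
    induction j with
    | zero => rw [pow_zero]; ext <;> simp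
    | succ j ih =>
      rw [pow_succ, ih]
      ext
      · simp only [SemidirectProduct.mul_left, sum_range_succ]
        rfl
      · simp only [SemidirectProduct.mul_right, pow_succ]
  rw [h, normEnd_apply, pow_orderOf_eq_one]
  rfl

variable (C) in
def leftSubgroup (N : Submodule ℤ M) : Subgroup (Multiplicative M ⋊[sdAction C M] C) :=
  (AddSubgroup.toSubgroup N.toAddSubgroup).map SemidirectProduct.inl

theorem mem_leftSubgroup {N : Submodule ℤ M} {p : Multiplicative M ⋊[sdAction C M] C} :
    p ∈ leftSubgroup C N ↔ p.right = 1 ∧ toAdd p.left ∈ N := by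
  constructor
  · rintro ⟨x, hx, rfl⟩
    exact ⟨rfl, hx⟩
  · rintro ⟨hr, hl⟩
    refine ⟨p.left, hl, ?_⟩
    ext
    · rfl
    · exact hr.symm

theorem leftSubgroup_normal {N : Submodule ℤ M} (hN : ∀ c : C, ∀ x ∈ N, c • x ∈ N) :
    (leftSubgroup C N).Normal where
  conj_mem p hp g := by
    obtain ⟨hr, hl⟩ := mem_leftSubgroup.1 hp
    refine mem_leftSubgroup.2 ⟨by simp [SemidirectProduct.mul_right, hr], ?_⟩
    have hconj : toAdd (g * p * g⁻¹).left = g.right • toAdd p.left := by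
      simp [SemidirectProduct.mul_left, SemidirectProduct.inv_left, hr]
    rw [hconj]
    exact hN _ _ hl

theorem sup_range_normEnd_eq_top {N : Submodule ℤ M} (hN : ∀ c : C, ∀ x ∈ N, c • x ∈ N)
    {a : C} {m' : M} (h : leftSubgroup C N ⊔ Subgroup.zpowers ⟨ofAdd m', a⟩ = ⊤) :
    N ⊔ LinearMap.range (normEnd M a) = ⊤ := by
  have := leftSubgroup_normal hN
  refine Submodule.eq_top_iff'.2 fun x => ?_
  have hx : (⟨ofAdd x, 1⟩ : Multiplicative M ⋊[sdAction C M] C) ∈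
      ((leftSubgroup C N ⊔ Subgroup.zpowers ⟨ofAdd m', a⟩ : Subgroup _) : Set _) := by
    rw [h]; trivial
  rw [Subgroup.normal_mul] at hx
  obtain ⟨ℓ, hℓ, _, ⟨k, rfl⟩, hx⟩ := hx
  beta_reduce at hx
  obtain ⟨hℓr, hℓl⟩ := mem_leftSubgroup.1 hℓ
  have hk : a ^ k = 1 := by
    have := congrArg SemidirectProduct.right hx
    rwa [SemidirectProduct.mul_right, hℓr, one_mul, right_pow_mk] at this
  obtain ⟨q, rfl⟩ := orderOf_dvd_iff_zpow_eq_one.2 hk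
  rw [zpow_mul, zpow_natCast, mk_pow_orderOf_s10, ← map_zpow] at hx
  have hleft := congrArg (toAdd ∘ SemidirectProduct.left) hx
  simp [-map_zpow, SemidirectProduct.mul_left, hℓr] at hleft
  rw [← hleft]
  exact Submodule.add_mem_sup hℓl ⟨q • m', by simp⟩

end

/-- If the norm element `ν(G)` is nilpotent in `R = ℤ[C]/ann(M)` (expressed via its
faithful action on `M`) and `(m_1, …, m_n, m'·a)` generates `G = M ⋊ C`, then
`(m_1, …, m_n)` already generates `M` as an `R`-module. -/
theorem stmt_10 {C M : Type*} [Group C] [AddCommGroup M] [DistribMulAction C M]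
    (a : C) (hC : ∀ c : C, c ∈ Subgroup.zpowers a)
    (hnil : ∃ k : ℕ, ∀ x : M, (fun y : M => ∑ᶠ c : C, c • y)^[k] x = 0)
    (n : ℕ) (m : Fin n → M) (m' : M)
    (hgen : Subgroup.closure
        ((Set.range fun i : Fin n =>
            (⟨Multiplicative.ofAdd (m i), 1⟩ : Multiplicative M ⋊[sdAction C M] C)) ∪
          {(⟨Multiplicative.ofAdd m', a⟩ : Multiplicative M ⋊[sdAction C M] C)}) = ⊤) :
    Submodule.span ℤ (Set.range fun p : C × Fin n => p.1 • m p.2) = ⊤ := by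
  set N := Submodule.span ℤ (Set.range fun p : C × Fin n => p.1 • m p.2)
  have hN : ∀ c : C, ∀ x ∈ N, c • x ∈ N := fun c _ => smul_mem_span_range_smul m c
  have hsup : leftSubgroup C N ⊔ Subgroup.zpowers ⟨ofAdd m', a⟩ = ⊤ := by
    rw [eq_top_iff, ← hgen, Subgroup.closure_le]
    rintro p (⟨i, rfl⟩ | rfl)
    · exact Subgroup.mem_sup_left
        (mem_leftSubgroup.2 ⟨rfl, Submodule.subset_span ⟨(1, i), one_smul C (m i)⟩⟩)
    · exact Subgroup.mem_sup_right (Subgroup.mem_zpowers _)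
  exact Submodule.eq_top_of_isNilpotent_of_sup_range_eq_top (isNilpotent_normEnd hC hnil)
    (map_normEnd_le hN a) (sup_range_normEnd_eq_top hN hsup)
end

section
/- Suppose M is a module over R = Z[C]/ann(M) admitting a decomposition M ≅ R/a_1 × ... × R/a_n into n cyclic factors where n equals the minimal number of generators of G = M ⋊ C as a group. Then the norm element ν(G) is invertible modulo a_1 + ... + a_n. -/
open scoped Classical in
noncomputable def sigmaFun {k : Type*} [Field k] (u : kˣ) (j : ℤ) : k :=
  if (u : k) = 1 then (j : k) else ((u ^ j : kˣ) - 1) * ((u : k) - 1)⁻¹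

lemma sigmaFun_add {k : Type*} [Field k] (u : kˣ) (i j : ℤ) :
    sigmaFun u (i + j) = sigmaFun u i + ((u ^ i : kˣ) : k) * sigmaFun u j := by
  classical
  by_cases h : (u : k) = 1
  · have hu : u = 1 := Units.ext h
    simp only [sigmaFun, if_pos h, hu, one_zpow, Units.val_one]
    push_cast; ring
  · have h1 : (u : k) - 1 ≠ 0 := sub_ne_zero.mpr h
    simp only [sigmaFun, if_neg h, zpow_add, Units.val_mul]
    field_simp
    ring

lemma sigmaFun_zero {k : Type*} [Field k] (u : kˣ) : sigmaFun u 0 = 0 := by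
  classical
  by_cases h : (u : k) = 1 <;> simp [sigmaFun, h]

lemma sigmaFun_one {k : Type*} [Field k] (u : kˣ) : sigmaFun u 1 = 1 := by
  classical
  by_cases h : (u : k) = 1
  · simp [sigmaFun, h]
  · have h1 : (u : k) - 1 ≠ 0 := sub_ne_zero.mpr h
    simp [sigmaFun, h, mul_inv_cancel₀ h1]

/-- If `M ≅ R/a_1 × ⋯ × R/a_n` as an `R = ℤ[C]/ann(M)`-module, where `n` is the
minimal number of generators of the group `G = M ⋊ C`, then the norm element
`ν(G)` (here `ν = ∑ᶠ c : C, χ c`, the image of the norm element of `ℤ[C]`) is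
invertible modulo `a_1 + ⋯ + a_n`. -/
theorem stmt_12 {C M R : Type*} [Group C] [AddCommGroup M] [DistribMulAction C M]
    [CommRing R] [Module R M] [FaithfulSMul R M]
    (a : C) (hC : ∀ c : C, c ∈ Subgroup.zpowers a)
    (χ : C →* Rˣ)
    (hχ : ∀ (c : C) (x : M), c • x = (χ c : R) • x)
    (hsurj : Subring.closure (Set.range fun c : C => ((χ c : R))) = ⊤)
    (n : ℕ) (aI : Fin n → Ideal R)
    (e : M ≃ₗ[R] ((i : Fin n) → R ⧸ aI i))
    (hrk : IsLeast {k : ℕ | ∃ S : Finset (Multiplicative M ⋊[sdAction C M] C),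
      S.card = k ∧ Subgroup.closure (S : Set (Multiplicative M ⋊[sdAction C M] C)) = ⊤} n) :
    IsUnit (Ideal.Quotient.mk (⨆ i, aI i) (∑ᶠ c : C, ((χ c : R)))) := by
  classical
  by_contra hcon
  set ν : R := ∑ᶠ c : C, ((χ c : R)) with hν
  set J : Ideal R := ⨆ i, aI i with hJdef
  obtain ⟨m', hm'max, hmem'⟩ := exists_max_ideal_of_mem_nonunits hcon
  set m : Ideal R := Ideal.comap (Ideal.Quotient.mk J) m' with hmdef
  haveI hmmax : m.IsMaximal :=
    Ideal.comap_isMaximal_of_surjective _ Ideal.Quotient.mk_surjective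
  have hJm : J ≤ m := by
    intro x hx
    show Ideal.Quotient.mk J x ∈ m'
    rw [Ideal.Quotient.eq_zero_iff_mem.mpr hx]
    exact m'.zero_mem
  have hνm : ν ∈ m := hmem'
  set k : Type _ := R ⧸ m with hkdef
  letI : Field k := Ideal.Quotient.field m
  set π : R →+* k := Ideal.Quotient.mk m with hπdef
  have hπν : π ν = 0 := Ideal.Quotient.eq_zero_iff_mem.mpr hνm
  set χ' : C →* kˣ := (Units.map (π : R →* k)).comp χ with hχ'def
  have hπχ : ∀ c : C, π ((χ c : R)) = ((χ' c : kˣ) : k) := fun c => rfl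
  set u : kˣ := χ' a with hudef
  -- discrete log
  have hlog : ∀ c : C, ∃ i : ℤ, a ^ i = c := fun c => Subgroup.mem_zpowers_iff.mp (hC c)
  set log : C → ℤ := fun c => (hlog c).choose with hlogdef
  have hlogspec : ∀ c, a ^ (log c) = c := fun c => (hlog c).choose_spec
  have hχ'log : ∀ c, χ' c = u ^ (log c) := by
    intro c
    conv_lhs => rw [← hlogspec c]
    rw [map_zpow]
  -- well-definedness of sigmaFun on exponents
  have hwd : ∀ i j : ℤ, a ^ i = a ^ j → sigmaFun u i = sigmaFun u j := by
    intro i j hij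
    by_cases ht : (u : k) = 1
    · rcases eq_or_ne i j with rfl | hne
      · rfl
      · have hone : a ^ (i - j) = 1 := by
          rw [zpow_sub, hij, mul_inv_cancel]
        have hfin : IsOfFinOrder a :=
          isOfFinOrder_iff_zpow_eq_one.mpr ⟨i - j, sub_ne_zero.mpr hne, hone⟩
        haveI : Finite C := by
          have hfin2 : (Subgroup.zpowers a : Set C).Finite := finite_zpowers.mpr hfin
          have : (Set.univ : Set C).Finite := hfin2.subset (fun c _ => hC c)
          exact Set.finite_univ_iff.mp this
        haveI : Fintype C := Fintype.ofFinite C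
        have hdvd : ((orderOf a : ℤ)) ∣ (i - j) := orderOf_dvd_iff_zpow_eq_one.mpr hone
        have hcard : orderOf a = Nat.card C := orderOf_eq_card_of_forall_mem_zpowers hC
        have hu1 : u = 1 := Units.ext ht
        have hallone : ∀ c : C, ((χ' c : kˣ) : k) = 1 := by
          intro c
          rw [hχ'log c, hu1, one_zpow, Units.val_one]
        have hνcast : ((Nat.card C : k)) = 0 := by
          rw [← hπν, hν, finsum_eq_sum_of_fintype, map_sum]
          simp only [hπχ, hallone]
          simp [Nat.card_eq_fintype_card]
        have hcastd : ((orderOf a : ℤ) : k) = 0 := by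
          rw [hcard]; exact_mod_cast hνcast
        obtain ⟨q, hq⟩ := hdvd
        have h0 : (i : k) = (j : k) := by
          have h1 : ((i - j : ℤ) : k) = 0 := by
            rw [hq, Int.cast_mul, hcastd, zero_mul]
          push_cast at h1
          exact sub_eq_zero.mp h1
        simp only [sigmaFun, if_pos ht]
        exact h0
    · have hzp : u ^ i = u ^ j := by
        have h2 : χ' (a ^ i) = χ' (a ^ j) := by rw [hij]
        rwa [map_zpow, map_zpow] at h2
      simp only [sigmaFun, if_neg ht, hzp]
  -- linear algebra part
  have haIm : ∀ i, aI i ≤ Submodule.comap (LinearMap.id : R →ₗ[R] R) m := by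
    intro i
    simpa using (le_iSup aI i).trans hJm
  set φ₁ : ((i : Fin n) → R ⧸ aI i) →ₗ[R] (Fin n → k) :=
    LinearMap.pi (fun i => (Submodule.mapQ (aI i) m LinearMap.id (haIm i)).comp
      (LinearMap.proj i)) with hφ₁def
  set φ : M →ₗ[R] (Fin n → k) := φ₁.comp (e : M →ₗ[R] _) with hφdef
  have hφsurj : Function.Surjective φ := by
    intro v
    have hsur : ∀ i : Fin n, ∃ r : R, π r = v i := fun i => Ideal.Quotient.mk_surjective (v i)
    choose r hr using hsur
    refine ⟨e.symm (fun i => Ideal.Quotient.mk (aI i) (r i)), ?_⟩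
    funext i
    simp only [hφdef, LinearMap.comp_apply, LinearEquiv.coe_coe, LinearEquiv.apply_symm_apply,
      hφ₁def, LinearMap.pi_apply, LinearMap.coe_comp, Function.comp_apply, LinearMap.proj_apply]
    rw [← Ideal.Quotient.mk_eq_mk, Submodule.mapQ_apply, LinearMap.id_apply]
    exact hr i
  have hsmul : ∀ (r : R) (x : k), r • x = π r * x := by
    intro r x
    obtain ⟨s, rfl⟩ := Ideal.Quotient.mk_surjective x
    rw [← map_mul, ← smul_eq_mul]
    exact (Submodule.Quotient.mk_smul m r s).symm
  -- generators
  obtain ⟨S, hScard, hSclos⟩ := hrk.1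
  set g : Fin n → (Multiplicative M ⋊[sdAction C M] C) :=
    fun i => (S.equivFin.symm (Fin.cast hScard.symm i) : _) with hgdef
  have hgmem : ∀ s ∈ S, ∃ i : Fin n, g i = s := by
    intro s hs
    refine ⟨Fin.cast hScard (S.equivFin ⟨s, hs⟩), ?_⟩
    simp [hgdef]
  set w : Fin n → (Fin n → k) := fun i => φ (Multiplicative.toAdd (g i).left) with hwdef
  set κ : Fin n → ℤ := fun i => log ((g i).right) with hκdef
  set T : ((Fin n → k) × k) →ₗ[k] (Fin n → k) :=
    { toFun := fun p => fun i => (∑ j, p.1 j * w i j) - sigmaFun u (κ i) * p.2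
      map_add' := by
        intro p q
        funext i
        simp only [Prod.fst_add, Prod.snd_add, Pi.add_apply, add_mul, mul_add,
          Finset.sum_add_distrib]
        ring
      map_smul' := by
        intro c p
        funext i
        simp only [Prod.smul_fst, Prod.smul_snd, Pi.smul_apply, smul_eq_mul, RingHom.id_apply]
        rw [mul_sub, Finset.mul_sum]
        congr 1
        · exact Finset.sum_congr rfl fun j _ => by ring
        · ring } with hTdef
  have hker : ∃ p : (Fin n → k) × k, T p = 0 ∧ p ≠ 0 := by
    have h1 : LinearMap.ker T ≠ ⊥ := by
      intro hbot
      have hinj : Function.Injective T := LinearMap.ker_eq_bot.mp hbot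
      have hle := LinearMap.finrank_le_finrank_of_injective hinj
      rw [Module.finrank_prod, Module.finrank_pi, Module.finrank_self] at hle
      simp only [Fintype.card_fin] at hle
      omega
    obtain ⟨p, hp, hp0⟩ := (Submodule.ne_bot_iff _).mp h1
    exact ⟨p, hp, hp0⟩
  obtain ⟨p, hpT, hp0⟩ := hker
  set y : Fin n → k := p.1 with hydef
  set γ₁ : k := p.2 with hγ₁def
  set F : M → k := fun x => ∑ j, y j * φ x j with hFdef
  set γ : C → k := fun c => sigmaFun u (log c) * γ₁ with hγdef
  have hF0 : F 0 = 0 := by simp [hFdef]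
  have hFadd : ∀ x z : M, F (x + z) = F x + F z := by
    intro x z; simp [hFdef, map_add, mul_add, Finset.sum_add_distrib]
  have hFneg : ∀ x : M, F (-x) = - F x := by
    intro x; simp [hFdef]
  have hFsmul : ∀ (c : C) (x : M), F (c • x) = ((χ' c : kˣ) : k) * F x := by
    intro c x
    rw [hχ c x]
    simp only [hFdef, map_smul]
    rw [Finset.mul_sum]
    refine Finset.sum_congr rfl fun j _ => ?_
    rw [Pi.smul_apply, hsmul, hπχ]
    ring
  have hγmul : ∀ c c' : C, γ (c * c') = γ c + ((χ' c : kˣ) : k) * γ c' := by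
    intro c c'
    have h1 : a ^ (log (c * c')) = a ^ (log c + log c') := by
      rw [zpow_add, hlogspec, hlogspec, hlogspec]
    show sigmaFun u (log (c * c')) * γ₁ = _
    rw [hwd _ _ h1, sigmaFun_add, hχ'log c]
    ring
  have hγ1 : γ 1 = 0 := by
    show sigmaFun u (log 1) * γ₁ = 0
    rw [hwd (log 1) 0 (by rw [hlogspec, zpow_zero]), sigmaFun_zero, zero_mul]
  have hγa : γ a = γ₁ := by
    show sigmaFun u (log a) * γ₁ = γ₁
    rw [hwd (log a) 1 (by rw [hlogspec, zpow_one]), sigmaFun_one, one_mul]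
  have hγinv : ∀ c : C, γ c⁻¹ = - (((χ' c⁻¹ : kˣ) : k) * γ c) := by
    intro c
    have h2 := hγmul c⁻¹ c
    rw [inv_mul_cancel, hγ1] at h2
    linear_combination -h2
  set H : Subgroup (Multiplicative M ⋊[sdAction C M] C) :=
    { carrier := {g | F (Multiplicative.toAdd g.left) = γ g.right}
      one_mem' := by
        show F (Multiplicative.toAdd (1 : Multiplicative M)) = γ 1
        rw [hγ1]
        exact hF0
      mul_mem' := by
        intro g₁ g₂ h1 h2
        show F (Multiplicative.toAdd ((g₁ * g₂).left)) = γ ((g₁ * g₂).right)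
        rw [SemidirectProduct.mul_left, SemidirectProduct.mul_right, toAdd_mul]
        have hact : Multiplicative.toAdd ((sdAction C M g₁.right) g₂.left)
            = g₁.right • Multiplicative.toAdd g₂.left := rfl
        rw [hact, hFadd, hFsmul, h1, h2, hγmul]
      inv_mem' := by
        intro g0 h
        show F (Multiplicative.toAdd ((g0⁻¹).left)) = γ ((g0⁻¹).right)
        rw [SemidirectProduct.inv_left, SemidirectProduct.inv_right]
        have hact : Multiplicative.toAdd ((sdAction C M g0.right⁻¹) g0.left⁻¹)
            = g0.right⁻¹ • Multiplicative.toAdd (g0.left⁻¹) := rfl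
        rw [hact, show Multiplicative.toAdd (g0.left⁻¹)
          = - Multiplicative.toAdd g0.left from rfl, hFsmul, hFneg, h, hγinv]
        ring } with hHdef
  have hSH : ∀ s ∈ S, s ∈ H := by
    intro s hs
    obtain ⟨i, rfl⟩ := hgmem s hs
    show F (Multiplicative.toAdd ((g i).left)) = γ ((g i).right)
    have hTi : (∑ j, y j * w i j) - sigmaFun u (κ i) * γ₁ = 0 := congrFun hpT i
    show (∑ j, y j * w i j) = sigmaFun u (κ i) * γ₁
    linear_combination hTi
  have hHtop : H = ⊤ := by
    rw [eq_top_iff, ← hSclos]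
    exact (Subgroup.closure_le H).mpr hSH
  by_cases hy : y = 0
  · have hγ₁ne : γ₁ ≠ 0 := by
      intro h0
      exact hp0 (Prod.ext hy h0)
    have hmem : (SemidirectProduct.inr a : Multiplicative M ⋊[sdAction C M] C) ∈ H := by
      rw [hHtop]; exact Subgroup.mem_top _
    have heq : F (Multiplicative.toAdd
        ((SemidirectProduct.inr a : Multiplicative M ⋊[sdAction C M] C).left))
        = γ ((SemidirectProduct.inr a : Multiplicative M ⋊[sdAction C M] C).right) := hmem
    rw [SemidirectProduct.left_inr, SemidirectProduct.right_inr,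
      show Multiplicative.toAdd (1 : Multiplicative M) = 0 from rfl, hF0, hγa] at heq
    exact hγ₁ne heq.symm
  · obtain ⟨i, hyi⟩ := Function.ne_iff.mp hy
    obtain ⟨x, hx⟩ := hφsurj (Pi.single i 1)
    have hmem : (SemidirectProduct.inl (Multiplicative.ofAdd x) :
        Multiplicative M ⋊[sdAction C M] C) ∈ H := by
      rw [hHtop]; exact Subgroup.mem_top _
    have heq : F x = γ 1 := hmem
    rw [hγ1] at heq
    have hFx : F x = y i := by
      show (∑ j, y j * φ x j) = y i
      rw [hx]
      simp [Pi.single_apply, mul_ite]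
    exact hyi (hFx.symm.trans heq)
end

section
/- Let G = R ⋊_α C with ν(G) = 0 (C = ⟨a⟩ infinite). If (g, g') is a generating pair of G, then D_a(g,g') is a unit of R, where D_a(r·c, r'·c') = r·d_a(c') - r'·d_a(c) for the derivation d_a: C → R with d_a(a) = 1. -/
/-- `∂_α(k)`: the Fox derivative `∂_α(k) = 1 + α + ⋯ + α^(k-1)` for `k ≥ 0`,
and `∂_α(k) = -α⁻¹·∂_{α⁻¹}(-k)` for `k < 0`. -/
def delta {R : Type*} [CommRing R] (α : Rˣ) : ℤ → R
  | (k : ℕ) => ∑ i ∈ Finset.range k, (α : R) ^ i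
  | (Int.negSucc k) => -((α⁻¹ : Rˣ) : R) * ∑ i ∈ Finset.range (k + 1), ((α⁻¹ : Rˣ) : R) ^ i

/-!
With `I = (D)`, where `D = r·∂(k') - r'·∂(k)`, every map `p ↦ λ·x(p) + μ·∂(k(p))` on
`G = R ⋊_α ℤ` is a crossed homomorphism, so the elements on which it lands in `I` form a
subgroup; if that subgroup contains `g` and `g'` it is all of `G`. The pairs
`(λ, μ) = (∂(k), -r)` and `(∂(k'), -r')` vanish modulo `I` on both generators, and evaluating
them at `a = (0, 1)` gives `r, r' ∈ I`. Then `(λ, μ) = (1, 0)` vanishes modulo `I` on both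
generators, and evaluating it at `(1, 0)` gives `1 ∈ I`.
-/

section CrossedHom

variable {G R : Type*} [Group G] [CommRing R]

lemma crossedHom_map_one {χ : G →* Rˣ} {f : G → R}
    (hf : ∀ p q, f (p * q) = f p + χ p * f q) : f 1 = 0 := by
  simpa using hf 1 1

lemma crossedHom_map_inv {χ : G →* Rˣ} {f : G → R}
    (hf : ∀ p q, f (p * q) = f p + χ p * f q) (p : G) : f p⁻¹ = -(χ p⁻¹ * f p) := by
  have h := hf p⁻¹ p
  rw [inv_mul_cancel, crossedHom_map_one hf] at h
  linear_combination -h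

def Ideal.crossedHomPreimage (I : Ideal R) (χ : G →* Rˣ) (f : G → R)
    (hf : ∀ p q, f (p * q) = f p + χ p * f q) : Subgroup G where
  carrier := {p | f p ∈ I}
  one_mem' := by
    show f 1 ∈ I
    rw [crossedHom_map_one hf]
    exact I.zero_mem
  mul_mem' {p q} hp hq := by
    show f (p * q) ∈ I
    rw [hf]
    exact I.add_mem hp (I.mul_mem_left _ hq)
  inv_mem' {p} hp := by
    show f p⁻¹ ∈ I
    rw [crossedHom_map_inv hf]
    exact I.neg_mem (I.mul_mem_left _ hp)

theorem Ideal.crossedHom_mem_of_closure_eq_top (I : Ideal R) (χ : G →* Rˣ) (f : G → R)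
    (hf : ∀ p q, f (p * q) = f p + χ p * f q) {S : Set G} (hS : Subgroup.closure S = ⊤)
    (hSI : ∀ s ∈ S, f s ∈ I) (p : G) : f p ∈ I := by
  have hle : Subgroup.closure S ≤ I.crossedHomPreimage χ f hf :=
    (Subgroup.closure_le _).mpr hSI
  exact hle (hS ▸ Subgroup.mem_top p)

end CrossedHom

section Delta

variable {R : Type*} [CommRing R] (α : Rˣ)

@[simp]
lemma delta_zero : delta α 0 = 0 := by
  simp [delta]

@[simp]
lemma delta_one : delta α 1 = 1 := by
  simp [delta]

lemma delta_add_one (n : ℤ) : delta α (n + 1) = delta α n + ((α ^ n : Rˣ) : R) := by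
  rcases n with k | k
  · show delta α ((k + 1 : ℕ) : ℤ) = delta α (k : ℤ) + _
    simp [delta, Finset.sum_range_succ, zpow_natCast]
  · rcases k with _ | j
    · show delta α 0 = delta α (Int.negSucc 0) + _
      simp [delta]
    · show delta α (Int.negSucc j) = delta α (Int.negSucc (j + 1)) + _
      rw [zpow_negSucc, ← inv_pow, Units.val_pow_eq_pow_val]
      simp only [delta, Finset.sum_range_succ]
      ring

lemma delta_sub_one (n : ℤ) : delta α (n - 1) = delta α n - ((α ^ (n - 1) : Rˣ) : R) := by
  rw [eq_sub_iff_add_eq, ← delta_add_one, sub_add_cancel]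

lemma delta_add (m n : ℤ) :
    delta α (m + n) = delta α m + ((α ^ m : Rˣ) : R) * delta α n := by
  induction n using Int.induction_on with
  | zero => simp
  | succ i ih =>
    rw [← add_assoc, delta_add_one, ih, delta_add_one, zpow_add, Units.val_mul]
    ring
  | pred i ih =>
    rw [add_sub_assoc', delta_sub_one, ih, delta_sub_one, add_sub_assoc m, zpow_add, Units.val_mul]
    ring

end Delta

section Semidirect

variable {R : Type*} [CommRing R] (α : Rˣ)

abbrev UnitSemidirect : Type _ :=
  Multiplicative R ⋊[(sdAction Rˣ R).comp (zpowersHom Rˣ α)] Multiplicative ℤ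

def UnitSemidirect.cocycle (lam mu : R) (p : UnitSemidirect α) : R :=
  lam * Multiplicative.toAdd p.left + mu * delta α (Multiplicative.toAdd p.right)

lemma UnitSemidirect.cocycle_mk (lam mu r : R) (k : ℤ) :
    cocycle α lam mu ⟨Multiplicative.ofAdd r, Multiplicative.ofAdd k⟩
      = lam * r + mu * delta α k :=
  rfl

def UnitSemidirect.character : UnitSemidirect α →* Rˣ :=
  (zpowersHom Rˣ α).comp SemidirectProduct.rightHom

lemma UnitSemidirect.cocycle_mul (lam mu : R) (p q : UnitSemidirect α) :
    cocycle α lam mu (p * q) = cocycle α lam mu p + character α p * cocycle α lam mu q := by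
  change lam * (Multiplicative.toAdd p.left + ((α ^ Multiplicative.toAdd p.right : Rˣ) : R)
      * Multiplicative.toAdd q.left)
      + mu * delta α (Multiplicative.toAdd p.right + Multiplicative.toAdd q.right)
    = _ + ((α ^ Multiplicative.toAdd p.right : Rˣ) : R) * _
  rw [delta_add]
  simp only [cocycle]
  ring

lemma UnitSemidirect.cocycle_mem_of_closure_eq_top (I : Ideal R) (lam mu : R)
    {g g' : UnitSemidirect α} (hgen : Subgroup.closure {g, g'} = ⊤)
    (hg : cocycle α lam mu g ∈ I) (hg' : cocycle α lam mu g' ∈ I) (p : UnitSemidirect α) :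
    cocycle α lam mu p ∈ I :=
  I.crossedHom_mem_of_closure_eq_top (character α) _ (cocycle_mul α lam mu) hgen
    (by rintro s (rfl | rfl) <;> assumption) p

end Semidirect

open UnitSemidirect in
theorem stmt_14_general {R : Type*} [CommRing R] (α : Rˣ)
    (r r' : R) (k k' : ℤ)
    (g g' : Multiplicative R ⋊[(sdAction Rˣ R).comp (zpowersHom Rˣ α)] Multiplicative ℤ)
    (hg : g = ⟨Multiplicative.ofAdd r, Multiplicative.ofAdd k⟩)
    (hg' : g' = ⟨Multiplicative.ofAdd r', Multiplicative.ofAdd k'⟩)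
    (hgen : Subgroup.closure {g, g'} = ⊤) :
    IsUnit (r * delta α k' - r' * delta α k) := by
  subst hg hg'
  set D := r * delta α k' - r' * delta α k
  set I := Ideal.span {D}
  have hD : D ∈ I := Ideal.mem_span_singleton_self D
  have key := cocycle_mem_of_closure_eq_top α I (hgen := hgen)
  have hr : r ∈ I := by
    simpa only [cocycle_mk, mul_zero, zero_add, delta_one, mul_one, neg_neg] using I.neg_mem <|
      key (delta α k) (-r) (by convert I.zero_mem using 1; rw [cocycle_mk]; ring)
        (by convert I.neg_mem hD using 1; rw [cocycle_mk]; ring)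
        ⟨Multiplicative.ofAdd 0, Multiplicative.ofAdd 1⟩
  have hr' : r' ∈ I := by
    simpa only [cocycle_mk, mul_zero, zero_add, delta_one, mul_one, neg_neg] using I.neg_mem <|
      key (delta α k') (-r') (by convert hD using 1; rw [cocycle_mk]; ring)
        (by convert I.zero_mem using 1; rw [cocycle_mk]; ring)
        ⟨Multiplicative.ofAdd 0, Multiplicative.ofAdd 1⟩
  have hone : (1 : R) ∈ I := by
    simpa only [cocycle_mk, one_mul, zero_mul, add_zero] using
      key 1 0 (by simpa only [cocycle_mk, one_mul, zero_mul, add_zero] using hr)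
        (by simpa only [cocycle_mk, one_mul, zero_mul, add_zero] using hr')
        ⟨Multiplicative.ofAdd 1, Multiplicative.ofAdd 0⟩
  exact isUnit_of_dvd_one (Ideal.mem_span_singleton.mp hone)

/-- In `G = R ⋊_α C` with `C` infinite cyclic (so `ν(G) = 0`) and `R` generated as
a ring by `α` and `α⁻¹`, if `(g, g')` is a generating pair of `G` then
`D_a(g,g') = r·d_a(a^{k'}) - r'·d_a(a^k)` is a unit of `R`. -/
theorem stmt_14 {R : Type*} [CommRing R] (α : Rˣ)
    (hR : Subring.closure {(α : R), ((α⁻¹ : Rˣ) : R)} = ⊤)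
    (r r' : R) (k k' : ℤ)
    (g g' : Multiplicative R ⋊[(sdAction Rˣ R).comp (zpowersHom Rˣ α)] Multiplicative ℤ)
    (hg : g = ⟨Multiplicative.ofAdd r, Multiplicative.ofAdd k⟩)
    (hg' : g' = ⟨Multiplicative.ofAdd r', Multiplicative.ofAdd k'⟩)
    (hgen : Subgroup.closure {g, g'} = ⊤) :
    IsUnit (r * delta α k' - r' * delta α k) :=
  stmt_14_general α r r' k k' g g' hg hg' hgen
end

section
/- Let g = r·a^k be an element of G = R ⋊_α C (r ∈ R, k ∈ Z). Then g commutes with all of its conjugates if and only if (1 - α^k)² = 0 and (1 - α)(1 - α^k)·r = 0 in R. -/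
/-!
Conjugating `g = r·c` by `h = s·c'` with `c, c'` commuting gives `h g h⁻¹ = ((1 - α) s + α' r)·c`,
where `α = χ c`, `α' = χ c'`, so the commutator `[g, h g h⁻¹]` has `R`-part
`(1 - α)((1 - α') r - (1 - α) s)`. Taking `h = 1·1` and `h = 0·a` gives the two conditions;
conversely, since `1 - χ a` divides `1 - χ (a ^ j)`, they kill every such commutator.
-/

theorem Units.val_sub_one_dvd_val_zpow_sub_one {R : Type*} [CommRing R] (u : Rˣ) (j : ℤ) :
    (u : R) - 1 ∣ ((u ^ j : Rˣ) : R) - 1 := by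
  obtain ⟨n, rfl | rfl⟩ := Int.eq_nat_or_neg j
  · simpa using sub_one_dvd_pow_sub_one (u : R) n
  · have hinv : ((u ^ (-(n : ℤ)) : Rˣ) : R) * (u : R) ^ n = 1 := by
      rw [← Units.val_pow_eq_pow_val, ← Units.val_mul, zpow_neg, zpow_natCast, inv_mul_cancel,
        Units.val_one]
    exact Dvd.dvd.trans (sub_one_dvd_pow_sub_one (u : R) n)
      ⟨-((u ^ (-(n : ℤ)) : Rˣ) : R), by linear_combination hinv⟩

namespace SemidirectProduct

variable {R C : Type*} [CommRing R] [Group C] {χ : C →* Rˣ}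

theorem mk_ofAdd_mul_mk_ofAdd (x y : R) (c c' : C) :
    (⟨.ofAdd x, c⟩ : Multiplicative R ⋊[(sdAction Rˣ R).comp χ] C) * ⟨.ofAdd y, c'⟩ =
      ⟨.ofAdd (x + χ c * y), c * c'⟩ := rfl

theorem inv_mk_ofAdd (x : R) (c : C) :
    (⟨.ofAdd x, c⟩ : Multiplicative R ⋊[(sdAction Rˣ R).comp χ] C)⁻¹ =
      ⟨.ofAdd (χ c⁻¹ * -x), c⁻¹⟩ := rfl

theorem commute_conj_mk_iff (r s : R) {c c' : C} (hcc' : Commute c c') :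
    (⟨.ofAdd r, c⟩ : Multiplicative R ⋊[(sdAction Rˣ R).comp χ] C) *
        (⟨.ofAdd s, c'⟩ * ⟨.ofAdd r, c⟩ * ⟨.ofAdd s, c'⟩⁻¹) =
      ⟨.ofAdd s, c'⟩ * ⟨.ofAdd r, c⟩ * ⟨.ofAdd s, c'⟩⁻¹ * ⟨.ofAdd r, c⟩ ↔
      (1 - χ c : R) * ((1 - χ c) * s - (1 - χ c') * r) = 0 := by
  have hconj : c' * c * c'⁻¹ = c := by rw [← hcc'.eq, mul_inv_cancel_right]
  have hχ : (χ (c' * c) : R) * χ c'⁻¹ = χ c := by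
    rw [← Units.val_mul, ← map_mul, hconj]
  simp only [inv_mk_ofAdd, mk_ofAdd_mul_mk_ofAdd, SemidirectProduct.ext_iff, hconj, and_true,
    EmbeddingLike.apply_eq_iff_eq, ← mul_assoc, hχ]
  constructor <;> intro h <;> linear_combination -h

end SemidirectProduct

theorem stmt_16_general {R C : Type*} [CommRing R] [Group C]
    (a : C) (hC : ∀ c : C, c ∈ Subgroup.zpowers a)
    (χ : C →* Rˣ)
    (r : R) (k : ℤ)
    (g : Multiplicative R ⋊[(sdAction Rˣ R).comp χ] C)
    (hg : g = ⟨Multiplicative.ofAdd r, a ^ k⟩) :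
    (∀ h : Multiplicative R ⋊[(sdAction Rˣ R).comp χ] C,
        g * (h * g * h⁻¹) = (h * g * h⁻¹) * g) ↔
      ((1 - ((χ a ^ k : Rˣ) : R)) ^ 2 = 0 ∧
        (1 - ((χ a : Rˣ) : R)) * (1 - ((χ a ^ k : Rˣ) : R)) * r = 0) := by
  subst hg
  have hχ (j : ℤ) : (χ (a ^ j) : R) = ((χ a ^ j : Rˣ) : R) := by rw [map_zpow]
  constructor
  · intro H
    have h₁ := (SemidirectProduct.commute_conj_mk_iff r 1 (Commute.one_right (a ^ k))).mp
      (H ⟨.ofAdd 1, 1⟩)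
    have h₂ := (SemidirectProduct.commute_conj_mk_iff r 0 (Commute.zpow_self a k)).mp
      (H ⟨.ofAdd 0, a⟩)
    rw [map_one, hχ, Units.val_one] at h₁
    rw [hχ] at h₂
    exact ⟨by linear_combination h₁, by linear_combination -h₂⟩
  · rintro ⟨h₁, h₂⟩ ⟨s, c'⟩
    obtain ⟨j, rfl⟩ := Subgroup.mem_zpowers_iff.mp (hC c')
    refine (SemidirectProduct.commute_conj_mk_iff r s.toAdd (Commute.zpow_zpow_self a k j)).mpr ?_
    rw [hχ, hχ]
    obtain ⟨t, ht⟩ := (χ a).val_sub_one_dvd_val_zpow_sub_one j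
    linear_combination s.toAdd * h₁ - t * h₂ + (1 - ((χ a ^ k : Rˣ) : R)) * r * ht

/-- In `G = R ⋊_α C` with `C = ⟨a⟩` cyclic acting on `R` via `χ : C →* Rˣ`, an
element `g = r·a^k` commutes with all of its conjugates if and only if
`(1 - α^k)² = 0` and `(1 - α)(1 - α^k)·r = 0` in `R`. -/
theorem stmt_16 {R C : Type*} [CommRing R] [Group C]
    (a : C) (hC : ∀ c : C, c ∈ Subgroup.zpowers a)
    (χ : C →* Rˣ)
    (hR : Subring.closure (Set.range fun c : C => ((χ c : R))) = ⊤)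
    (r : R) (k : ℤ)
    (g : Multiplicative R ⋊[(sdAction Rˣ R).comp χ] C)
    (hg : g = ⟨Multiplicative.ofAdd r, a ^ k⟩) :
    (∀ h : Multiplicative R ⋊[(sdAction Rˣ R).comp χ] C,
        g * (h * g * h⁻¹) = (h * g * h⁻¹) * g) ↔
      ((1 - ((χ a ^ k : Rˣ) : R)) ^ 2 = 0 ∧
        (1 - ((χ a : Rˣ) : R)) * (1 - ((χ a ^ k : Rˣ) : R)) * r = 0) :=
  stmt_16_general a hC χ r k g hg
end

section
/- Let G = R ⋊_α C, let ω be the multiplicative order of α in R^×, and suppose ω = |C| and that for every integer k with α^k ≠ 1 we have (1 - α^k)² ≠ 0. Then R is a characteristic subgroup of G. -/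
/-!
Every element `y` of the abelian normal subgroup `R` commutes with each of its conjugates
`g y g⁻¹`, and this property is preserved by automorphisms. Conversely, if `x = (m, c)`
commutes with its conjugate by `(1, 1)`, a direct computation gives `(1 - α^k)² = 0` for
`c = a^k`; the hypothesis then forces `α^k = 1`, so `ω = |C|` divides `k` and `c = 1`,
i.e. `x ∈ R`.
-/

namespace Subgroup

variable {G : Type*} [Group G]

theorem commute_conj_of_mem {N : Subgroup G} [N.Normal] [IsMulCommutative N] {y : G}
    (hy : y ∈ N) (g : G) : Commute y (g * y * g⁻¹) := by
  have h := mul_comm' (⟨y, hy⟩ : N) ⟨g * y * g⁻¹, Normal.conj_mem ‹_› y hy g⟩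
  exact congrArg Subtype.val h

theorem characteristic_of_commute_conj_imp_mem (N : Subgroup G) [N.Normal]
    [IsMulCommutative N] (g : G) (hN : ∀ x : G, Commute x (g * x * g⁻¹) → x ∈ N) :
    N.Characteristic := by
  refine characteristic_iff_map_le.mpr fun e _ ⟨y, hy, hey⟩ => hey ▸ hN _ ?_
  simpa using (commute_conj_of_mem hy (e.symm g)).map e.toMonoidHom

end Subgroup

namespace SemidirectProduct

variable {N G : Type*} [Group N] [Group G] {φ : G →* MulAut N}

theorem mem_range_inl_iff {x : N ⋊[φ] G} : x ∈ (inl : N →* N ⋊[φ] G).range ↔ x.right = 1 := by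
  rw [range_inl_eq_ker_rightHom]
  rfl

instance range_inl_normal : (inl : N →* N ⋊[φ] G).range.Normal := by
  rw [range_inl_eq_ker_rightHom]
  infer_instance

end SemidirectProduct

@[simp]
theorem sdAction_units_apply {R : Type*} [CommRing R] (u : Rˣ) (m : Multiplicative R) :
    sdAction Rˣ R u m = Multiplicative.ofAdd ((u : R) * Multiplicative.toAdd m) :=
  rfl

open SemidirectProduct in
theorem one_sub_sq_eq_zero_of_commute_conj {R C : Type*} [CommRing R] [Group C] (χ : C →* Rˣ)
    {x : Multiplicative R ⋊[(sdAction Rˣ R).comp χ] C}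
    (hx : Commute x (inl (Multiplicative.ofAdd 1) * x * (inl (Multiplicative.ofAdd 1))⁻¹)) :
    (1 - (χ x.right : R)) ^ 2 = 0 := by
  have h := congrArg (fun z => Multiplicative.toAdd z.left) hx.eq
  simp only [mul_left, mul_right, inv_left, inv_right, left_inl, right_inl, one_mul, mul_one, inv_one,
    MonoidHom.comp_apply, map_one, MulAut.one_apply, sdAction_units_apply, toAdd_mul, toAdd_inv,
    toAdd_ofAdd] at h
  linear_combination -h

theorem eq_one_of_one_sub_sq_eq_zero {R C : Type*} [CommRing R] [Group C]
    (a : C) (hC : ∀ c : C, c ∈ Subgroup.zpowers a) (χ : C →* Rˣ)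
    (hω : orderOf (χ a) = Nat.card C)
    (hsq : ∀ k : ℤ, (χ a) ^ k ≠ 1 → (1 - ((χ a ^ k : Rˣ) : R)) ^ 2 ≠ 0)
    {c : C} (hc : (1 - (χ c : R)) ^ 2 = 0) : c = 1 := by
  obtain ⟨k, rfl⟩ := Subgroup.mem_zpowers_iff.mp (hC c)
  have hχ : χ a ^ k = 1 := by
    by_contra hne
    exact hsq k hne (by rwa [← map_zpow])
  obtain ⟨m, rfl⟩ : (Nat.card C : ℤ) ∣ k := hω ▸ orderOf_dvd_iff_zpow_eq_one.mpr hχ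
  rw [zpow_mul, zpow_natCast, pow_card_eq_one', one_zpow]

theorem stmt_17_general {R C : Type*} [CommRing R] [Group C]
    (a : C) (hC : ∀ c : C, c ∈ Subgroup.zpowers a)
    (χ : C →* Rˣ)
    (hω : orderOf (χ a) = Nat.card C)
    (hsq : ∀ k : ℤ, (χ a) ^ k ≠ 1 → (1 - ((χ a ^ k : Rˣ) : R)) ^ 2 ≠ 0) :
    ∀ e : (Multiplicative R ⋊[(sdAction Rˣ R).comp χ] C) ≃*
        (Multiplicative R ⋊[(sdAction Rˣ R).comp χ] C),
      Subgroup.map e.toMonoidHom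
          (SemidirectProduct.inl :
            Multiplicative R →* Multiplicative R ⋊[(sdAction Rˣ R).comp χ] C).range =
        (SemidirectProduct.inl :
          Multiplicative R →* Multiplicative R ⋊[(sdAction Rˣ R).comp χ] C).range := by
  refine Subgroup.characteristic_iff_map_eq.mp <|
    Subgroup.characteristic_of_commute_conj_imp_mem _
      (SemidirectProduct.inl (Multiplicative.ofAdd 1)) fun x hx => ?_
  exact SemidirectProduct.mem_range_inl_iff.mpr <|
    eq_one_of_one_sub_sq_eq_zero a hC χ hω hsq (one_sub_sq_eq_zero_of_commute_conj χ hx)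

/-- In `G = R ⋊_α C` with `C = ⟨a⟩` cyclic acting on `R` via `χ : C →* Rˣ`
(`α = χ a`), if the order `ω` of `α` in `Rˣ` equals `|C|` and `(1 - α^k)² ≠ 0`
whenever `α^k ≠ 1`, then `R` is a characteristic subgroup of `G`. -/
theorem stmt_17 {R C : Type*} [CommRing R] [Group C]
    (a : C) (hC : ∀ c : C, c ∈ Subgroup.zpowers a)
    (χ : C →* Rˣ)
    (hR : Subring.closure (Set.range fun c : C => ((χ c : R))) = ⊤)
    (hω : orderOf (χ a) = Nat.card C)
    (hsq : ∀ k : ℤ, (χ a) ^ k ≠ 1 → (1 - ((χ a ^ k : Rˣ) : R)) ^ 2 ≠ 0) :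
    ∀ e : (Multiplicative R ⋊[(sdAction Rˣ R).comp χ] C) ≃*
        (Multiplicative R ⋊[(sdAction Rˣ R).comp χ] C),
      Subgroup.map e.toMonoidHom
          (SemidirectProduct.inl :
            Multiplicative R →* Multiplicative R ⋊[(sdAction Rˣ R).comp χ] C).range =
        (SemidirectProduct.inl :
          Multiplicative R →* Multiplicative R ⋊[(sdAction Rˣ R).comp χ] C).range :=
  stmt_17_general a hC χ hω hsq
end
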